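/- arXiv:2005.02833 — 9 statements merged into one kernel-verified Lean document; each statement's English description precedes it below -/
import Mathlib

section
/- Every graph that has a normal spanning tree has countable colouring number. -/
open SimpleGraph

universe u v w

/-- `x ≤ y` in the tree-order of the tree `T` rooted at `r`:
`x` lies on every path in `T` from `r` to `y`. -/
def treeLE {V : Type u} (T : SimpleGraph V) (r x y : V) : Prop :=
  ∀ p : T.Walk r y, p.IsPath → x ∈ p.support

/-- `T` is a normal spanning tree of `G` with root `r`. -/
def IsNormalSpanningTree {V : Type u} (G T : SimpleGraph V) (r : V) : Prop :=
  T ≤ G ∧ T.IsTree ∧ ∀ ⦃x y : V⦄, G.Adj x y → (treeLE T r x y ∨ treeLE T r y x)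

def HasNormalSpanningTree {V : Type u} (G : SimpleGraph V) : Prop :=
  ∃ (T : SimpleGraph V) (r : V), IsNormalSpanningTree G T r

/-- `G` has countable colouring number: there is a well-order on `V` in which
every vertex has only finitely many neighbours preceding it. -/
def CountableColouringNumber {V : Type u} (G : SimpleGraph V) : Prop :=
  ∃ lt : V → V → Prop, IsWellOrder V lt ∧ ∀ v : V, {u : V | G.Adj u v ∧ lt u v}.Finite

/-- A witness that `H` is a minor of `G`, via branch sets. -/
structure MinorMap {W : Type w} {V : Type v} (H : SimpleGraph W) (G : SimpleGraph V) where
  branch : W → Set V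
  branch_nonempty : ∀ x, (branch x).Nonempty
  branch_connected : ∀ x, (G.induce (branch x)).Connected
  branch_disjoint : ∀ ⦃x y⦄, x ≠ y → Disjoint (branch x) (branch y)
  branch_adj : ∀ ⦃x y⦄, H.Adj x y → ∃ u ∈ branch x, ∃ v ∈ branch y, G.Adj u v

def IsMinor {W : Type w} {V : Type v} (H : SimpleGraph W) (G : SimpleGraph V) : Prop :=
  Nonempty (MinorMap H G)


/-!
Order the vertices by their depth in the normal spanning tree, breaking ties by an arbitrary
well-order. A neighbour `u` of `v` that precedes `v` is no deeper than `v`, so by normality it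
cannot lie strictly above `v` in the tree-order; hence it lies below `v`, i.e. on the finite
path from the root to `v`.
-/

theorem countableColouringNumber_of_finite_adj_le {V α : Type*} [LinearOrder α]
    [WellFoundedLT α] (G : SimpleGraph V) (f : V → α)
    (hf : ∀ v, {u | G.Adj u v ∧ f u ≤ f v}.Finite) : CountableColouringNumber G := by
  let lex : V → V → Prop := InvImage (Prod.Lex (· < ·) WellOrderingRel) fun v => (f v, v)
  let key : lex ↪r Prod.Lex (· < ·) WellOrderingRel :=
    ⟨⟨fun v => (f v, v), fun _ _ h => congrArg Prod.snd h⟩, Iff.rfl⟩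
  refine ⟨lex, key.isWellOrder, fun v => (hf v).subset fun u ⟨hadj, hlt⟩ => ⟨hadj, ?_⟩⟩
  exact (Prod.lex_def.1 hlt).elim le_of_lt fun h => h.1.le

theorem treeLE.dist_lt {V : Type*} {T : SimpleGraph V} {r x y : V} (hy : T.Reachable r y)
    (hxy : treeLE T r x y) (hne : x ≠ y) : T.dist r x < T.dist r y := by
  classical
  obtain ⟨p, hp, hlen⟩ := hy.exists_path_of_dist
  calc T.dist r x ≤ (p.takeUntil x (hxy p hp)).length := dist_le _
    _ < p.length := p.length_takeUntil_lt_length _ hne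
    _ = T.dist r y := hlen

theorem IsNormalSpanningTree.finite_adj_dist_le {V : Type*} {G T : SimpleGraph V} {r : V}
    (hT : IsNormalSpanningTree G T r) (v : V) :
    {u | G.Adj u v ∧ T.dist r u ≤ T.dist r v}.Finite := by
  have hconn : T.Connected := hT.2.1.connected
  obtain ⟨p, hp⟩ := (hconn r v).exists_isPath
  refine p.support.finite_toSet.subset fun u ⟨hadj, hle⟩ => ?_
  refine (hT.2.2 hadj).elim (fun huv => huv p hp) fun hvu => ?_
  exact absurd hle (hvu.dist_lt (hconn r u) hadj.ne').not_ge

/-- Every graph with a normal spanning tree has countable colouring number. -/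
theorem stmt2 {V : Type u} (G : SimpleGraph V) (h : HasNormalSpanningTree G) :
    CountableColouringNumber G := by
  obtain ⟨T, r, hT⟩ := h
  exact countableColouringNumber_of_finite_adj_le G _ hT.finite_adj_dist_le
end

section
/- The property of having a normal spanning tree is closed under taking connected minors: if a graph G has a normal spanning tree and H is a connected minor of G, then H has a normal spanning tree. -/
open SimpleGraph

universe u v w

/-!
The tree-order of a normal spanning tree is a normal tree order: a partial order whose
down-closures are finite chains and in which adjacent vertices are comparable. Such an order on
`G` pulls back to a minor `H` by comparing the minima of the branch sets, which exist because
branch sets are connected; adjacent branch sets have comparable minima because the order is normal.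

Conversely, a connected graph `H` with a normal tree order has a normal spanning tree, built in
stages. Stage `n` is a normal tree containing all vertices of height at most `n`, and the
neighbourhood of each component of its complement is a finite chain. For every component whose
minimum `m` has height `n + 1`, a path from the top of its neighbourhood through the component to
`m` is attached. Parent pointers never change once set, so they converge to a normal spanning tree.
-/

section TreeOrder

variable {V : Type*} {T : SimpleGraph V} {r x y z : V}

theorem treeLE_iff_mem_support (hT : T.IsTree) {p : T.Walk r y} (hp : p.IsPath) :
    treeLE T r x y ↔ x ∈ p.support :=
  ⟨fun h => h p hp, fun hx _ hq => (hT.existsUnique_path r y).unique hq hp ▸ hx⟩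

theorem treeLE_iff_prefix (hT : T.IsTree) {p : T.Walk r x} (hp : p.IsPath)
    {q : T.Walk r y} (hq : q.IsPath) : treeLE T r x y ↔ p.support <+: q.support := by
  rw [treeLE_iff_mem_support hT hq]
  refine ⟨fun hx => ?_, fun h => h.mem p.end_mem_support⟩
  classical
  rw [← (hT.existsUnique_path r x).unique (hq.takeUntil hx) hp]
  exact q.support_takeUntil_prefix_support hx

theorem treeLE_refl (x : V) : treeLE T r x x := fun p _ => p.end_mem_support

theorem treeLE_trans (hT : T.IsTree) (hxy : treeLE T r x y) (hyz : treeLE T r y z) :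
    treeLE T r x z := by
  obtain ⟨p, hp⟩ := (hT.existsUnique_path r x).exists
  obtain ⟨q, hq⟩ := (hT.existsUnique_path r y).exists
  obtain ⟨s, hs⟩ := (hT.existsUnique_path r z).exists
  rw [treeLE_iff_prefix hT hp hq] at hxy
  rw [treeLE_iff_prefix hT hq hs] at hyz
  exact (treeLE_iff_prefix hT hp hs).2 (hxy.trans hyz)

theorem treeLE_antisymm (hT : T.IsTree) (hxy : treeLE T r x y) (hyx : treeLE T r y x) :
    x = y := by
  obtain ⟨p, hp⟩ := (hT.existsUnique_path r x).exists
  obtain ⟨q, hq⟩ := (hT.existsUnique_path r y).exists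
  rw [treeLE_iff_prefix hT hp hq] at hxy
  rw [treeLE_iff_prefix hT hq hp] at hyx
  have hpq : p.support = q.support := hxy.eq_of_length (hxy.length_le.antisymm hyx.length_le)
  have hlast := congrArg List.getLast? hpq
  rwa [List.getLast?_eq_some_getLast (by simp), List.getLast?_eq_some_getLast (by simp),
    p.getLast_support, q.getLast_support, Option.some_inj] at hlast

theorem treeLE_total_of_le (hT : T.IsTree) (hxz : treeLE T r x z) (hyz : treeLE T r y z) :
    treeLE T r x y ∨ treeLE T r y x := by
  obtain ⟨p, hp⟩ := (hT.existsUnique_path r x).exists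
  obtain ⟨q, hq⟩ := (hT.existsUnique_path r y).exists
  obtain ⟨s, hs⟩ := (hT.existsUnique_path r z).exists
  rw [treeLE_iff_prefix hT hp hs] at hxz
  rw [treeLE_iff_prefix hT hq hs] at hyz
  rw [treeLE_iff_prefix hT hp hq, treeLE_iff_prefix hT hq hp]
  exact List.prefix_or_prefix_of_prefix hxz hyz

theorem treeLE_finite (hT : T.IsTree) (y : V) : {x | treeLE T r x y}.Finite := by
  obtain ⟨p, hp⟩ := (hT.existsUnique_path r y).exists
  simp_rw [treeLE_iff_mem_support hT hp]
  exact p.support.finite_toSet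

end TreeOrder

section Ancestor

variable {α : Type*} {par par' : α → α} {a b c : α}

def IsAncestor (par : α → α) (a b : α) : Prop := ∃ k, par^[k] b = a

namespace IsAncestor

theorem refl (par : α → α) (a : α) : IsAncestor par a a := ⟨0, rfl⟩

theorem parent (par : α → α) (a : α) : IsAncestor par (par a) a := ⟨1, rfl⟩

theorem trans (hab : IsAncestor par a b) (hbc : IsAncestor par b c) : IsAncestor par a c := by
  obtain ⟨k, rfl⟩ := hab
  obtain ⟨l, rfl⟩ := hbc
  exact ⟨k + l, Function.iterate_add_apply par k l c⟩

theorem of_eqOn {U : Set α} (hU : Set.MapsTo par U U) (hpar : Set.EqOn par' par U) (hb : b ∈ U)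
    (h : IsAncestor par a b) : IsAncestor par' a b := by
  obtain ⟨k, rfl⟩ := h
  refine ⟨k, ?_⟩
  induction k with
  | zero => rfl
  | succ k ih =>
    rw [Function.iterate_succ_apply', Function.iterate_succ_apply', ih]
    exact hpar (hU.iterate k hb)

theorem dep_le {U : Set α} {r : α} {dep : α → ℕ} (hU : Set.MapsTo par U U) (hroot : par r = r)
    (hdep : ∀ x ∈ U, x ≠ r → dep (par x) < dep x) (hb : b ∈ U) (h : IsAncestor par a b) :
    dep a ≤ dep b := by
  obtain ⟨k, rfl⟩ := h
  induction k with
  | zero => rfl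
  | succ k ih =>
    rw [Function.iterate_succ_apply']
    by_cases hk : par^[k] b = r
    · rwa [hk, hroot, ← hk]
    · exact (hdep _ (hU.iterate k hb) hk).le.trans ih

theorem eq_of_dep_le {U : Set α} {r : α} {dep : α → ℕ} (hU : Set.MapsTo par U U)
    (hroot : par r = r) (hdep : ∀ x ∈ U, x ≠ r → dep (par x) < dep x) (hb : b ∈ U)
    (h : IsAncestor par a b) (hba : dep b ≤ dep a) : a = b := by
  obtain ⟨_ | k, rfl⟩ := h
  · rfl
  by_cases hbr : b = r
  · subst hbr
    exact Function.iterate_fixed hroot _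
  have := dep_le hU hroot hdep (hU hb) ⟨k, rfl⟩
  exact absurd (this.trans_lt (hdep b hb hbr)) (not_lt.2 hba)

end IsAncestor

end Ancestor

section ParentTree

variable {W : Type*} {r : W} {par : W → W} {dep : W → ℕ}

def parentTree (r : W) (par : W → W) : SimpleGraph W :=
  fromRel fun x y => x ≠ r ∧ par x = y

theorem parentTree_adj {x y : W} : (parentTree r par).Adj x y ↔
    x ≠ y ∧ ((x ≠ r ∧ par x = y) ∨ (y ≠ r ∧ par y = x)) :=
  fromRel_adj _ _ _

theorem parentTree_le {H : SimpleGraph W} (hadj : ∀ x, x ≠ r → H.Adj (par x) x) :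
    parentTree r par ≤ H := by
  intro x y h
  rcases (parentTree_adj.1 h).2 with ⟨hx, rfl⟩ | ⟨hy, rfl⟩
  · exact (hadj x hx).symm
  · exact hadj y hy

theorem eq_root_of_isAncestor_root (hroot : par r = r) {a : W} (h : IsAncestor par a r) :
    a = r := by
  obtain ⟨k, rfl⟩ := h
  exact Function.iterate_fixed hroot k

theorem parentTree_adj_descendant {x u v : W} (hu : IsAncestor par x u) (hv : ¬IsAncestor par x v)
    (huv : (parentTree r par).Adj u v) : u = x ∧ v = par x := by
  rcases (parentTree_adj.1 huv).2 with ⟨-, rfl⟩ | ⟨-, rfl⟩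
  · obtain ⟨_ | k, hk⟩ := hu
    · exact ⟨hk, congrArg par hk⟩
    · exact absurd ⟨k, hk⟩ hv
  · exact absurd (hu.trans (IsAncestor.parent par v)) hv

theorem treeLE_parentTree_of_isAncestor (hroot : par r = r) {x y : W} (h : IsAncestor par x y) :
    treeLE (parentTree r par) r x y := by
  intro p _
  by_cases hx : x = r
  · exact hx ▸ p.start_mem_support
  obtain ⟨d, hd, hfst, hsnd⟩ := p.reverse.exists_boundary_dart {z | IsAncestor par x z} h
    (fun hr => hx (eq_root_of_isAncestor_root hroot hr))
  have hdx : d.fst = x := (parentTree_adj_descendant hfst hsnd d.adj).1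
  simpa [hdx] using p.reverse.dart_fst_mem_support_of_mem_darts hd

theorem isBridge_parentTree (hroot : par r = r) (hdep : ∀ x, x ≠ r → dep (par x) < dep x)
    {x : W} (hx : x ≠ r) : (parentTree r par).IsBridge s(x, par x) := by
  rw [isBridge_iff]
  rintro ⟨p⟩
  have hpar : ¬IsAncestor par x (par x) := fun h => by
    have := h.eq_of_dep_le (Set.mapsTo_univ par _) hroot (fun y _ => hdep y) trivial (hdep x hx).le
    exact (hdep x hx).ne (congrArg dep this).symm
  obtain ⟨d, -, hfst, hsnd⟩ := p.exists_boundary_dart {z | IsAncestor par x z}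
    (IsAncestor.refl par x) hpar
  have hd := deleteEdges_adj.1 d.adj
  obtain ⟨h1, h2⟩ := parentTree_adj_descendant hfst hsnd hd.1
  exact hd.2 (by rw [h1, h2]; rfl)

theorem parentTree_isAcyclic (hroot : par r = r) (hdep : ∀ x, x ≠ r → dep (par x) < dep x) :
    (parentTree r par).IsAcyclic := by
  refine isAcyclic_iff_forall_adj_isBridge.2 fun u v huv => ?_
  rcases (parentTree_adj.1 huv).2 with ⟨hu, rfl⟩ | ⟨hv, rfl⟩
  · exact isBridge_parentTree hroot hdep hu
  · rw [Sym2.eq_swap]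
    exact isBridge_parentTree hroot hdep hv

theorem parentTree_connected (hdep : ∀ x, x ≠ r → dep (par x) < dep x) :
    (parentTree r par).Connected := by
  refine (connected_iff_exists_forall_reachable _).2 ⟨r, fun x => ?_⟩
  induction hx : dep x using Nat.strong_induction_on generalizing x with
  | _ n ih =>
    by_cases hxr : x = r
    · exact hxr ▸ Reachable.refl x
    have hlt := hdep x hxr
    refine (ih _ (hx ▸ hlt) (par x) rfl).trans (Adj.reachable ?_)
    exact parentTree_adj.2 ⟨fun h => (h ▸ hlt).false, Or.inr ⟨hxr, rfl⟩⟩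

theorem isNormalSpanningTree_parentTree {H : SimpleGraph W} (hroot : par r = r)
    (hadj : ∀ x, x ≠ r → H.Adj (par x) x) (hdep : ∀ x, x ≠ r → dep (par x) < dep x)
    (hcomp : ∀ x y, H.Adj x y → IsAncestor par x y ∨ IsAncestor par y x) :
    IsNormalSpanningTree H (parentTree r par) r :=
  ⟨parentTree_le hadj, ⟨parentTree_connected hdep, parentTree_isAcyclic hroot hdep⟩,
    fun x y h => (hcomp x y h).imp (treeLE_parentTree_of_isAncestor hroot)
      (treeLE_parentTree_of_isAncestor hroot)⟩

end ParentTree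

structure IsNormalTreeOrder {W : Type*} (H : SimpleGraph W) (le : W → W → Prop) : Prop where
  refl : ∀ x, le x x
  trans : ∀ {x y z}, le x y → le y z → le x z
  antisymm : ∀ {x y}, le x y → le y x → x = y
  total_of_le : ∀ {x y z}, le x z → le y z → le x y ∨ le y x
  finite_le : ∀ x, {y | le y x}.Finite
  adj : ∀ {x y}, H.Adj x y → le x y ∨ le y x

theorem IsNormalSpanningTree.isNormalTreeOrder {V : Type*} {G T : SimpleGraph V} {r : V}
    (h : IsNormalSpanningTree G T r) : IsNormalTreeOrder G (treeLE T r) where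
  refl := treeLE_refl
  trans := treeLE_trans h.2.1
  antisymm := treeLE_antisymm h.2.1
  total_of_le := treeLE_total_of_le h.2.1
  finite_le := treeLE_finite h.2.1
  adj hxy := h.2.2 hxy

namespace IsNormalTreeOrder

variable {W : Type*} {H : SimpleGraph W} {le : W → W → Prop}

theorem comap {V : Type*} {G : SimpleGraph V} {le : V → V → Prop} (h : IsNormalTreeOrder G le)
    {f : W → V} (hf : Function.Injective f)
    (hadj : ∀ {x y}, H.Adj x y → le (f x) (f y) ∨ le (f y) (f x)) :
    IsNormalTreeOrder H fun x y => le (f x) (f y) where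
  refl x := h.refl (f x)
  trans := h.trans
  antisymm hxy hyx := hf (h.antisymm hxy hyx)
  total_of_le := h.total_of_le
  finite_le x := (h.finite_le (f x)).preimage hf.injOn
  adj := hadj

noncomputable def height (le : W → W → Prop) (x : W) : ℕ := {y | le y x}.ncard

theorem height_lt_height (h : IsNormalTreeOrder H le) {x y : W} (hxy : le x y) (hne : x ≠ y) :
    height le x < height le y := by
  refine Set.ncard_lt_ncard ⟨fun z hz => h.trans hz hxy, fun hsub => hne ?_⟩ (h.finite_le y)
  exact h.antisymm hxy (hsub (h.refl y))

theorem exists_min_support (h : IsNormalTreeOrder H le) {a b : W} (p : H.Walk a b) :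
    ∃ m ∈ p.support, ∀ z ∈ p.support, le m z := by
  induction p with
  | @nil u => exact ⟨u, by simp, by simpa using h.refl u⟩
  | @cons a c b hac q ih =>
    obtain ⟨m, hm, hmin⟩ := ih
    have hmc : le m c := hmin c q.start_mem_support
    have hma : le m a ∨ le a m := by
      rcases h.adj hac with hac | hca
      · exact h.total_of_le hmc hac
      · exact Or.inl (h.trans hmc hca)
    rcases hma with hma | ham
    · exact ⟨m, by simp [hm], by simpa [hma] using hmin⟩
    · exact ⟨a, by simp, by simpa [h.refl a] using fun z hz => h.trans ham (hmin z hz)⟩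

theorem exists_min_of_walks (h : IsNormalTreeOrder H le) {S : Set W}
    (hS : ∀ a ∈ S, ∀ b ∈ S, ∃ p : H.Walk a b, ∀ z ∈ p.support, z ∈ S) {v : W} (hv : v ∈ S) :
    ∃ m ∈ S, ∀ s ∈ S, le m s := by
  obtain ⟨m, ⟨hmS, hmv⟩, hmin⟩ := Set.exists_min_image {y | y ∈ S ∧ le y v} (height le)
    ((h.finite_le v).subset fun y hy => hy.2) ⟨v, hv, h.refl v⟩
  refine ⟨m, hmS, fun s hs => ?_⟩
  obtain ⟨p, hp⟩ := hS m hmS s hs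
  obtain ⟨μ, hμ, hμmin⟩ := h.exists_min_support p
  have hμm : le μ m := hμmin m p.start_mem_support
  -- `μ` lies below `v` too, so it cannot be strictly below `m`
  have hμeq : μ = m := by
    by_contra hne
    exact (hmin μ ⟨hp μ hμ, h.trans hμm hmv⟩).not_gt (h.height_lt_height hμm hne)
  exact hμeq ▸ hμmin s p.end_mem_support

theorem exists_min_of_connected_induce (h : IsNormalTreeOrder H le) {S : Set W}
    (hS : (H.induce S).Connected) : ∃ m ∈ S, ∀ s ∈ S, le m s := by
  obtain ⟨⟨v, hv⟩⟩ := hS.nonempty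
  refine h.exists_min_of_walks (fun a ha b hb => ?_) hv
  obtain ⟨p⟩ := hS.preconnected ⟨a, ha⟩ ⟨b, hb⟩
  let q := p.map (Embedding.induce S).toHom
  refine ⟨q, fun z (hz : z ∈ q.support) => ?_⟩
  obtain ⟨z', -, rfl⟩ := List.mem_map.1 (p.support_map _ ▸ hz)
  exact z'.2

end IsNormalTreeOrder

theorem MinorMap.exists_isNormalTreeOrder {V W : Type*} {G : SimpleGraph V} {H : SimpleGraph W}
    (M : MinorMap H G) {le : V → V → Prop} (h : IsNormalTreeOrder G le) :
    ∃ le' : W → W → Prop, IsNormalTreeOrder H le' := by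
  choose f hf hfmin using fun x => h.exists_min_of_connected_induce (M.branch_connected x)
  have hinj : Function.Injective f := fun x y hxy => by
    by_contra hne
    exact Set.disjoint_left.1 (M.branch_disjoint hne) (hf x) (hxy ▸ hf y)
  refine ⟨_, h.comap hinj fun {x y} hxy => ?_⟩
  obtain ⟨u, hu, v, hv, huv⟩ := M.branch_adj hxy
  rcases h.adj huv with huv | hvu
  · exact h.total_of_le (h.trans (hfmin x u hu) huv) (hfmin y v hv)
  · exact h.total_of_le (hfmin x u hu) (h.trans (hfmin y v hv) hvu)

section Components

variable {W : Type*} {H : SimpleGraph W} {U : Set W} {a b c v : W}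

def ReachOutside (H : SimpleGraph W) (U : Set W) (a b : W) : Prop :=
  ∃ p : H.Walk a b, ∀ z ∈ p.support, z ∉ U

namespace ReachOutside

theorem refl (ha : a ∉ U) : ReachOutside H U a a := ⟨.nil, by simpa using ha⟩

theorem symm (h : ReachOutside H U a b) : ReachOutside H U b a := by
  obtain ⟨p, hp⟩ := h
  exact ⟨p.reverse, fun z hz => hp z (by simpa using hz)⟩

theorem trans (hab : ReachOutside H U a b) (hbc : ReachOutside H U b c) :
    ReachOutside H U a c := by
  obtain ⟨p, hp⟩ := hab
  obtain ⟨q, hq⟩ := hbc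
  exact ⟨p.append q, fun z hz => ((Walk.mem_support_append_iff p q).1 hz).elim
    (hp z) (hq z)⟩

theorem of_adj (ha : a ∉ U) (hb : b ∉ U) (hab : H.Adj a b) : ReachOutside H U a b :=
  ⟨hab.toWalk, by simp [ha, hb]⟩

theorem notMem_left (h : ReachOutside H U a b) : a ∉ U :=
  h.elim fun p hp => hp a p.start_mem_support

theorem notMem_right (h : ReachOutside H U a b) : b ∉ U :=
  h.elim fun p hp => hp b p.end_mem_support

theorem mono {U' : Set W} (hU : U ⊆ U') (h : ReachOutside H U' a b) : ReachOutside H U a b :=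
  h.imp fun _ hp z hz hzU => hp z hz (hU hzU)

theorem of_mem_support {p : H.Walk a b} (hp : ∀ z ∈ p.support, z ∉ U) {z : W}
    (hz : z ∈ p.support) : ReachOutside H U a z := by
  classical
  exact ⟨p.takeUntil z hz, fun y hy => hp y (p.support_takeUntil_subset_support hz hy)⟩

end ReachOutside

theorem IsNormalTreeOrder.exists_min_reachOutside {le : W → W → Prop}
    (h : IsNormalTreeOrder H le) (hv : v ∉ U) :
    ∃ m, ReachOutside H U v m ∧ ∀ s, ReachOutside H U v s → le m s := by
  refine h.exists_min_of_walks (S := {w | ReachOutside H U v w}) (fun a ha b hb => ?_)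
    (ReachOutside.refl hv)
  obtain ⟨p, hp⟩ := ha.symm.trans hb
  exact ⟨p, fun z hz => ha.trans (ReachOutside.of_mem_support hp hz)⟩

/-- The neighbourhood of the component of `H - U` containing `v`. -/
def componentNbhd (H : SimpleGraph W) (U : Set W) (v : W) : Set W :=
  {u | u ∈ U ∧ ∃ w, H.Adj u w ∧ ReachOutside H U v w}

theorem componentNbhd_congr {v' : W} (h : ReachOutside H U v v') :
    componentNbhd H U v = componentNbhd H U v' := by
  ext u
  exact and_congr_right fun _ => exists_congr fun w =>
    and_congr_right fun _ => ⟨h.symm.trans, h.trans⟩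

theorem componentNbhd_nonempty (hH : H.Connected) {r : W} (hr : r ∈ U) (hv : v ∉ U) :
    (componentNbhd H U v).Nonempty := by
  obtain ⟨p⟩ := hH.preconnected v r
  obtain ⟨d, -, hfst, hsnd⟩ := p.exists_boundary_dart {w | ReachOutside H U v w}
    (ReachOutside.refl hv) fun h => h.notMem_right hr
  have hsndU : d.snd ∈ U := by
    by_contra hU
    exact hsnd (hfst.trans (.of_adj hfst.notMem_right hU d.adj))
  exact ⟨d.snd, hsndU, d.fst, d.adj.symm, hfst⟩

end Components

section Stages

open IsNormalTreeOrder

variable {W : Type*} {H : SimpleGraph W} {le : W → W → Prop} {r : W} {n : ℕ}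

/-- Stage `n` of the construction: a tree on `U` given by parent pointers and depths. It is normal
in `H` in the sense that two vertices of `U` joined by an edge, or by a path whose interior avoids
`U` (that is, lying in the neighbourhood of one component of `H - U`), are comparable. -/
structure Stage (H : SimpleGraph W) (le : W → W → Prop) (r : W) (n : ℕ) where
  U : Set W
  par : W → W
  dep : W → ℕ
  root_mem : r ∈ U
  par_root : par r = r
  mapsTo_par : Set.MapsTo par U U
  adj_par : ∀ x ∈ U, x ≠ r → H.Adj (par x) x
  dep_par_lt : ∀ x ∈ U, x ≠ r → dep (par x) < dep x
  adj_comparable : ∀ a ∈ U, ∀ b ∈ U, H.Adj a b → IsAncestor par a b ∨ IsAncestor par b a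
  nbhd_comparable : ∀ v ∉ U, ∀ a ∈ componentNbhd H U v, ∀ b ∈ componentNbhd H U v,
    IsAncestor par a b ∨ IsAncestor par b a
  nbhd_finite : ∀ v ∉ U, (componentNbhd H U v).Finite
  lt_height : ∀ v ∉ U, n < height le v

namespace Stage

section Attaching

variable (S : Stage H le r n)

theorem exists_top (hH : H.Connected) {v : W} (hv : v ∉ S.U) :
    ∃ t ∈ componentNbhd H S.U v, ∀ u ∈ componentNbhd H S.U v, IsAncestor S.par u t := by
  obtain ⟨t, ht, hmax⟩ := Set.exists_max_image _ S.dep (S.nbhd_finite v hv)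
    (componentNbhd_nonempty hH S.root_mem hv)
  refine ⟨t, ht, fun u hu => (S.nbhd_comparable v hv u hu t ht).elim id fun htu => ?_⟩
  rw [htu.eq_of_dep_le S.mapsTo_par S.par_root S.dep_par_lt hu.1 (hmax u hu)]
  exact IsAncestor.refl _ _

/-- The minima of the components of `H - U` that stage `n + 1` has to cover. -/
def minima : Set W :=
  {m | m ∉ S.U ∧ (∀ s, ReachOutside H S.U m s → le m s) ∧ height le m = n + 1}

theorem eq_of_mem_minima (h : IsNormalTreeOrder H le) {m m' : W} (hm : m ∈ S.minima)
    (hm' : m' ∈ S.minima) (hmm' : ReachOutside H S.U m m') : m = m' :=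
  h.antisymm (hm.2.1 m' hmm') (hm'.2.1 m hmm'.symm)

/-- A path from the top `t` of the neighbourhood of the component of `m` through that component
to `m`. -/
structure IsAttachingPath {t m : W} (p : H.Walk t m) : Prop where
  isPath : p.IsPath
  top_mem : t ∈ componentNbhd H S.U m
  le_top : ∀ u ∈ componentNbhd H S.U m, IsAncestor S.par u t
  reach : ∀ x ∈ p.support, x ≠ t → ReachOutside H S.U m x

theorem exists_isAttachingPath (hH : H.Connected) {m : W} (hm : m ∉ S.U) :
    ∃ t, ∃ p : H.Walk t m, S.IsAttachingPath p := by
  classical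
  obtain ⟨t, ⟨htU, w, htw, q, hq⟩, htop⟩ := S.exists_top hH hm
  let p₀ : H.Walk t m := .cons htw q.reverse
  refine ⟨t, p₀.bypass, p₀.bypass_isPath, ⟨htU, w, htw, q, hq⟩, htop, fun x hx hxt => ?_⟩
  have hx₀ : x ∈ p₀.support := p₀.support_bypass_subset_support hx
  simp only [p₀, Walk.support_cons, Walk.support_reverse,
    List.mem_cons, List.mem_reverse, hxt, false_or] at hx₀
  exact ReachOutside.of_mem_support hq hx₀

variable {S} {t m x : W} {p : H.Walk t m}

theorem IsAttachingPath.reach_of_notMem (hP : S.IsAttachingPath p) (hx : x ∈ p.support)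
    (hxU : x ∉ S.U) : ReachOutside H S.U m x :=
  hP.reach x hx fun hxt => hxU (hxt ▸ hP.top_mem.1)

theorem IsAttachingPath.getElem_succ_notMem (hP : S.IsAttachingPath p) {i : ℕ}
    (hi : i + 1 < p.support.length) : p.support[i + 1] ∉ S.U := by
  refine (hP.reach _ (List.getElem_mem hi) fun h => ?_).notMem_right
  have h0 : p.support[i + 1] = p.support[0] := h.trans p.support_getElem_zero.symm
  exact i.succ_ne_zero (hP.isPath.support_nodup.getElem_inj_iff.1 h0)

end Attaching

/-- Attaching paths for the vertices of `S.minima`; `top` and `path` are arbitrary elsewhere. -/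
structure Attachment (S : Stage H le r n) where
  top : W → W
  path : ∀ m, H.Walk (top m) m
  isAttachingPath : ∀ m ∈ S.minima, S.IsAttachingPath (path m)

theorem nonempty_attachment (S : Stage H le r n) (hH : H.Connected) : Nonempty S.Attachment := by
  classical
  choose t p hp using fun m (hm : m ∈ S.minima) => S.exists_isAttachingPath hH hm.1
  -- `path` has a dependent type, so the choice is made total through a sigma type
  let σ : ∀ m, (t : W) × H.Walk t m := fun m =>
    if hm : m ∈ S.minima then ⟨t m hm, p m hm⟩ else ⟨m, .nil⟩
  refine ⟨⟨fun m => (σ m).1, fun m => (σ m).2, fun m hm => ?_⟩⟩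
  simp only [σ]
  rw [dif_pos hm]
  exact hp m hm

namespace Attachment

variable {S : Stage H le r n} (A : S.Attachment)

def U : Set W := S.U ∪ {x | ∃ m ∈ S.minima, x ∈ (A.path m).support}

/- A new vertex `x` on `A.path m` gets its predecessor on that path as parent, and the depth of
`A.top m` plus its position on the path as depth. -/
open scoped Classical in
noncomputable def par (x : W) : W :=
  if x ∈ S.U then S.par x
  else if h : ∃ m ∈ S.minima, x ∈ (A.path m).support then
    (A.path h.choose).support.getD ((A.path h.choose).support.idxOf x - 1) x
  else x

open scoped Classical in
noncomputable def dep (x : W) : ℕ :=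
  if x ∈ S.U then S.dep x
  else if h : ∃ m ∈ S.minima, x ∈ (A.path m).support then
    S.dep (A.top h.choose) + (A.path h.choose).support.idxOf x
  else 0

/-- The neighbourhood of the component of `v` in `H - S.U` together with the path attached inside
that component. After attaching it is a chain, and it contains the neighbourhood of every new
component inside the old one. -/
def chain (v : W) : Set W :=
  componentNbhd H S.U v ∪ {x | ∃ m ∈ S.minima, ReachOutside H S.U m v ∧ x ∈ (A.path m).support}

variable {A} {m v x a b : W}

theorem par_of_mem (hx : x ∈ S.U) : A.par x = S.par x := if_pos hx

theorem dep_of_mem (hx : x ∈ S.U) : A.dep x = S.dep x := if_pos hx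

theorem eq_of_mem_support (h : IsNormalTreeOrder H le) {m' : W} (hm : m ∈ S.minima)
    (hm' : m' ∈ S.minima) (hx : x ∈ (A.path m).support) (hx' : x ∈ (A.path m').support)
    (hxU : x ∉ S.U) : m = m' :=
  S.eq_of_mem_minima h hm hm' (((A.isAttachingPath m hm).reach_of_notMem hx hxU).trans
    ((A.isAttachingPath m' hm').reach_of_notMem hx' hxU).symm)

open scoped Classical in
theorem par_of_mem_support (h : IsNormalTreeOrder H le) (hm : m ∈ S.minima)
    (hx : x ∈ (A.path m).support) (hxU : x ∉ S.U) :
    A.par x = (A.path m).support.getD ((A.path m).support.idxOf x - 1) x := by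
  have hex : ∃ m' ∈ S.minima, x ∈ (A.path m').support := ⟨m, hm, hx⟩
  rw [par, if_neg hxU, dif_pos hex,
    eq_of_mem_support h hex.choose_spec.1 hm hex.choose_spec.2 hx hxU]

open scoped Classical in
theorem dep_of_mem_support (h : IsNormalTreeOrder H le) (hm : m ∈ S.minima)
    (hx : x ∈ (A.path m).support) (hxU : x ∉ S.U) :
    A.dep x = S.dep (A.top m) + (A.path m).support.idxOf x := by
  have hex : ∃ m' ∈ S.minima, x ∈ (A.path m').support := ⟨m, hm, hx⟩
  rw [dep, if_neg hxU, dif_pos hex,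
    eq_of_mem_support h hex.choose_spec.1 hm hex.choose_spec.2 hx hxU]

theorem par_getElem_succ (h : IsNormalTreeOrder H le) (hm : m ∈ S.minima) {i : ℕ}
    (hi : i + 1 < (A.path m).support.length) :
    A.par (A.path m).support[i + 1] = (A.path m).support[i] := by
  classical
  rw [par_of_mem_support h hm (List.getElem_mem hi)
    ((A.isAttachingPath m hm).getElem_succ_notMem hi),
    (A.isAttachingPath m hm).isPath.support_nodup.idxOf_getElem, Nat.add_sub_cancel,
    List.getD_eq_getElem?_getD, List.getElem?_eq_getElem (Nat.lt_of_succ_lt hi), Option.getD_some]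

theorem dep_getElem (h : IsNormalTreeOrder H le) (hm : m ∈ S.minima) {i : ℕ}
    (hi : i < (A.path m).support.length) :
    A.dep (A.path m).support[i] = S.dep (A.top m) + i := by
  classical
  cases i with
  | zero =>
    simp only [Walk.support_getElem_zero, add_zero]
    exact dep_of_mem (A.isAttachingPath m hm).top_mem.1
  | succ i =>
    rw [dep_of_mem_support h hm (List.getElem_mem hi)
      ((A.isAttachingPath m hm).getElem_succ_notMem hi),
      (A.isAttachingPath m hm).isPath.support_nodup.idxOf_getElem]

theorem isAncestor_getElem (h : IsNormalTreeOrder H le) (hm : m ∈ S.minima) {i j : ℕ}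
    (hij : i ≤ j) (hj : j < (A.path m).support.length) :
    IsAncestor A.par (A.path m).support[i] (A.path m).support[j] := by
  obtain ⟨k, rfl⟩ := Nat.exists_eq_add_of_le hij
  refine ⟨k, ?_⟩
  induction k with
  | zero => rfl
  | succ k ih =>
    rw [Function.iterate_succ_apply]
    simp only [← add_assoc]
    rw [par_getElem_succ h hm]
    exact ih (by omega) (by omega)

theorem isAncestor_par_of_isAncestor (hb : b ∈ S.U) (h : IsAncestor S.par a b) :
    IsAncestor A.par a b :=
  h.of_eqOn S.mapsTo_par (fun _ hx => par_of_mem hx) hb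

theorem isAncestor_par_of_mem_componentNbhd (h : IsNormalTreeOrder H le) (hm : m ∈ S.minima)
    (ha : a ∈ componentNbhd H S.U m) (hx : x ∈ (A.path m).support) : IsAncestor A.par a x := by
  have hP := A.isAttachingPath m hm
  obtain ⟨j, hj, rfl⟩ := List.mem_iff_getElem.1 hx
  have htop := isAncestor_getElem h hm (Nat.zero_le j) hj
  rw [Walk.support_getElem_zero] at htop
  exact (isAncestor_par_of_isAncestor hP.top_mem.1 (hP.le_top a ha)).trans htop

theorem comparable_of_mem_support (h : IsNormalTreeOrder H le) (hm : m ∈ S.minima)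
    (ha : a ∈ (A.path m).support) (hb : b ∈ (A.path m).support) :
    IsAncestor A.par a b ∨ IsAncestor A.par b a := by
  obtain ⟨i, hi, rfl⟩ := List.mem_iff_getElem.1 ha
  obtain ⟨j, hj, rfl⟩ := List.mem_iff_getElem.1 hb
  exact (le_total i j).imp (isAncestor_getElem h hm · hj) (isAncestor_getElem h hm · hi)

theorem mem_U_cases (hx : x ∈ A.U) : x ∈ S.U ∨ ∃ m ∈ S.minima, ∃ i,
    ∃ hi : i + 1 < (A.path m).support.length, (A.path m).support[i + 1] = x := by
  by_cases hxU : x ∈ S.U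
  · exact Or.inl hxU
  obtain ⟨m, hm, hxm⟩ := hx.resolve_left hxU
  obtain ⟨_ | i, hi, rfl⟩ := List.mem_iff_getElem.1 hxm
  · simp only [Walk.support_getElem_zero] at hxU
    exact absurd (A.isAttachingPath m hm).top_mem.1 hxU
  · exact Or.inr ⟨m, hm, i, hi, rfl⟩

theorem mem_chain {w : W} (ha : a ∈ A.U) (haw : H.Adj a w ∨ a = w)
    (hvw : ReachOutside H S.U v w) : a ∈ A.chain v := by
  by_cases haU : a ∈ S.U
  · rcases haw with haw | rfl
    · exact Or.inl ⟨haU, w, haw, hvw⟩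
    · exact absurd haU hvw.notMem_right
  obtain ⟨m, hm, ham⟩ := ha.resolve_left haU
  have haw' : ReachOutside H S.U a w :=
    haw.elim (.of_adj haU hvw.notMem_right) fun h => h ▸ .refl haU
  exact Or.inr ⟨m, hm, ((A.isAttachingPath m hm).reach_of_notMem ham haU).trans
    (haw'.trans hvw.symm), ham⟩

theorem comparable_of_mem_chain (h : IsNormalTreeOrder H le) (ha : a ∈ A.chain v)
    (hb : b ∈ A.chain v) : IsAncestor A.par a b ∨ IsAncestor A.par b a := by
  rcases ha with ha | ⟨m, hm, hmv, ham⟩ <;> rcases hb with hb | ⟨m', hm', hm'v, hbm'⟩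
  · have hvU : v ∉ S.U := ha.2.elim fun _ hw => hw.2.notMem_left
    exact (S.nbhd_comparable v hvU a ha b hb).imp
      (isAncestor_par_of_isAncestor hb.1) (isAncestor_par_of_isAncestor ha.1)
  · exact Or.inl (isAncestor_par_of_mem_componentNbhd h hm'
      (componentNbhd_congr hm'v ▸ ha) hbm')
  · exact Or.inr (isAncestor_par_of_mem_componentNbhd h hm
      (componentNbhd_congr hmv ▸ hb) ham)
  · obtain rfl := S.eq_of_mem_minima h hm hm' (hmv.trans hm'v.symm)
    exact comparable_of_mem_support h hm ham hbm'

theorem chain_finite (h : IsNormalTreeOrder H le) (hv : v ∉ S.U) : (A.chain v).Finite := by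
  refine (S.nbhd_finite v hv).union ?_
  have hsub : {m | m ∈ S.minima ∧ ReachOutside H S.U m v}.Subsingleton := fun m hm m' hm' =>
    S.eq_of_mem_minima h hm.1 hm'.1 (hm.2.trans hm'.2.symm)
  refine (hsub.finite.biUnion fun m _ => (A.path m).support.finite_toSet).subset ?_
  rintro x ⟨m, hm, hmv, hx⟩
  exact Set.mem_biUnion ⟨hm, hmv⟩ hx

theorem componentNbhd_subset_chain : componentNbhd H A.U v ⊆ A.chain v :=
  fun _ ⟨hu, _, huw, hvw⟩ => mem_chain hu (Or.inl huw) (hvw.mono Set.subset_union_left)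

theorem adj_comparable (h : IsNormalTreeOrder H le) (ha : a ∈ A.U) (hb : b ∈ A.U)
    (hab : H.Adj a b) : IsAncestor A.par a b ∨ IsAncestor A.par b a := by
  by_cases hbU : b ∈ S.U
  · by_cases haU : a ∈ S.U
    · exact (S.adj_comparable a haU b hbU hab).imp (isAncestor_par_of_isAncestor hbU)
        (isAncestor_par_of_isAncestor haU)
    · exact comparable_of_mem_chain h (mem_chain ha (Or.inr rfl) (.refl haU))
        (mem_chain hb (Or.inl hab.symm) (.refl haU))
  · exact comparable_of_mem_chain h (mem_chain ha (Or.inl hab) (.refl hbU))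
      (mem_chain hb (Or.inr rfl) (.refl hbU))

theorem lt_height (h : IsNormalTreeOrder H le) (hv : v ∉ A.U) : n + 1 < height le v := by
  have hvU : v ∉ S.U := fun h' => hv (Or.inl h')
  obtain ⟨m, hvm, hmin⟩ := h.exists_min_reachOutside hvU
  have hmv : le m v := hmin v (.refl hvU)
  by_contra hle
  -- the minimum `m` of the component of `v` has height above `n`, hence it is `v` itself
  have hmeq : m = v := by
    by_contra hne
    have := S.lt_height m hvm.notMem_right
    have := h.height_lt_height hmv hne
    omega
  have hm : v ∈ S.minima :=
    ⟨hvU, fun s hs => hmeq ▸ hmin s (hvm.trans (hmeq ▸ hs)), by have := S.lt_height v hvU; omega⟩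
  exact hv (Or.inr ⟨v, hm, (A.path v).end_mem_support⟩)

noncomputable def toStage (A : S.Attachment)
    (h : IsNormalTreeOrder H le) : Stage H le r (n + 1) where
  U := A.U
  par := A.par
  dep := A.dep
  root_mem := Or.inl S.root_mem
  par_root := by rw [par_of_mem S.root_mem, S.par_root]
  mapsTo_par x hx := by
    rcases mem_U_cases hx with hx | ⟨m, hm, i, hi, rfl⟩
    · rw [par_of_mem hx]
      exact Or.inl (S.mapsTo_par hx)
    · rw [par_getElem_succ h hm hi]
      exact Or.inr ⟨m, hm, List.getElem_mem _⟩
  adj_par x hx hxr := by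
    rcases mem_U_cases hx with hx | ⟨m, hm, i, hi, rfl⟩
    · rw [par_of_mem hx]
      exact S.adj_par x hx hxr
    · rw [par_getElem_succ h hm hi]
      exact (A.path m).isChain_adj_support.getElem i hi
  dep_par_lt x hx hxr := by
    rcases mem_U_cases hx with hx | ⟨m, hm, i, hi, rfl⟩
    · rw [par_of_mem hx, dep_of_mem hx, dep_of_mem (S.mapsTo_par hx)]
      exact S.dep_par_lt x hx hxr
    · rw [par_getElem_succ h hm hi, dep_getElem h hm, dep_getElem h hm]
      exact Nat.lt_add_one _
  adj_comparable _ ha _ hb hab := adj_comparable h ha hb hab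
  nbhd_comparable _ _ _ ha _ hb := comparable_of_mem_chain h
    (componentNbhd_subset_chain ha) (componentNbhd_subset_chain hb)
  nbhd_finite _ hv := (chain_finite h fun hvU => hv (Or.inl hvU)).subset
    componentNbhd_subset_chain
  lt_height _ hv := lt_height h hv

end Attachment

def Extends {n' : ℕ} (S : Stage H le r n) (S' : Stage H le r n') : Prop :=
  S.U ⊆ S'.U ∧ Set.EqOn S'.par S.par S.U ∧ Set.EqOn S'.dep S.dep S.U

theorem Extends.trans {n' n'' : ℕ} {S : Stage H le r n} {S' : Stage H le r n'}
    {S'' : Stage H le r n''} (h : S.Extends S') (h' : S'.Extends S'') : S.Extends S'' :=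
  ⟨h.1.trans h'.1, fun _ hx => (h'.2.1 (h.1 hx)).trans (h.2.1 hx),
    fun _ hx => (h'.2.2 (h.1 hx)).trans (h.2.2 hx)⟩

theorem exists_extends (h : IsNormalTreeOrder H le) (hH : H.Connected) (S : Stage H le r n) :
    ∃ S' : Stage H le r (n + 1), S.Extends S' := by
  obtain ⟨A⟩ := S.nonempty_attachment hH
  exact ⟨A.toStage h, Set.subset_union_left, fun _ hx => Attachment.par_of_mem hx,
    fun _ hx => Attachment.dep_of_mem hx⟩

def base (h : IsNormalTreeOrder H le) (r : W) : Stage H le r 0 where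
  U := {r}
  par := id
  dep _ := 0
  root_mem := rfl
  par_root := rfl
  mapsTo_par _ hx := hx
  adj_par _ hx hxr := absurd hx hxr
  dep_par_lt _ hx hxr := absurd hx hxr
  adj_comparable _ ha _ hb _ := Or.inl (ha.trans hb.symm ▸ IsAncestor.refl _ _)
  nbhd_comparable _ _ _ ha _ hb := Or.inl ((ha.1.trans hb.1.symm) ▸ IsAncestor.refl _ _)
  nbhd_finite _ _ := (Set.finite_singleton r).subset fun _ hu => hu.1
  lt_height v _ := (Set.ncard_pos (h.finite_le v)).2 ⟨v, h.refl v⟩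

noncomputable def seq (h : IsNormalTreeOrder H le) (hH : H.Connected) (r : W) :
    ∀ n, Stage H le r n
  | 0 => base h r
  | n + 1 => (exists_extends h hH (seq h hH r n)).choose

end Stage

end Stages

namespace IsNormalTreeOrder

variable {W : Type*} {H : SimpleGraph W} {le : W → W → Prop}
variable (h : IsNormalTreeOrder H le) (hH : H.Connected) (r : W)

theorem seq_extends {m n : ℕ} (hmn : m ≤ n) :
    (Stage.seq h hH r m).Extends (Stage.seq h hH r n) := by
  induction n, hmn using Nat.le_induction with
  | base => exact ⟨subset_rfl, fun _ _ => rfl, fun _ _ => rfl⟩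
  | succ n _ ih => exact ih.trans (Stage.exists_extends h hH (Stage.seq h hH r n)).choose_spec

theorem mem_seq_height (x : W) : x ∈ (Stage.seq h hH r (height le x)).U := by
  by_contra hx
  exact (lt_irrefl _) ((Stage.seq h hH r _).lt_height x hx)

/-- The parent of `x` in the first stage containing `x`; later stages do not change it. -/
noncomputable def limitPar (x : W) : W := (Stage.seq h hH r (height le x)).par x

noncomputable def limitDep (x : W) : ℕ := (Stage.seq h hH r (height le x)).dep x

variable {h hH r}

theorem limitPar_eq {n : ℕ} {x : W} (hx : x ∈ (Stage.seq h hH r n).U) :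
    limitPar h hH r x = (Stage.seq h hH r n).par x := by
  rcases le_total n (height le x) with hn | hn
  · exact (seq_extends h hH r hn).2.1 hx
  · exact ((seq_extends h hH r hn).2.1 (mem_seq_height h hH r x)).symm

theorem limitDep_eq {n : ℕ} {x : W} (hx : x ∈ (Stage.seq h hH r n).U) :
    limitDep h hH r x = (Stage.seq h hH r n).dep x := by
  rcases le_total n (height le x) with hn | hn
  · exact (seq_extends h hH r hn).2.2 hx
  · exact ((seq_extends h hH r hn).2.2 (mem_seq_height h hH r x)).symm

theorem limitPar_root : limitPar h hH r r = r := (Stage.seq h hH r _).par_root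

theorem adj_limitPar {x : W} (hx : x ≠ r) : H.Adj (limitPar h hH r x) x :=
  (Stage.seq h hH r _).adj_par x (mem_seq_height h hH r x) hx

theorem limitDep_limitPar_lt {x : W} (hx : x ≠ r) :
    limitDep h hH r (limitPar h hH r x) < limitDep h hH r x := by
  let S := Stage.seq h hH r (height le x)
  have hxS : x ∈ S.U := mem_seq_height h hH r x
  rw [limitPar, limitDep_eq (S.mapsTo_par hxS), limitDep]
  exact S.dep_par_lt x hxS hx

theorem limitPar_comparable {x y : W} (hxy : H.Adj x y) :
    IsAncestor (limitPar h hH r) x y ∨ IsAncestor (limitPar h hH r) y x := by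
  let S := Stage.seq h hH r (max (height le x) (height le y))
  have hx : x ∈ S.U := (seq_extends h hH r (le_max_left _ _)).1 (mem_seq_height h hH r x)
  have hy : y ∈ S.U := (seq_extends h hH r (le_max_right _ _)).1 (mem_seq_height h hH r y)
  have hpar : Set.EqOn (limitPar h hH r) S.par S.U := fun _ hz => limitPar_eq hz
  exact (S.adj_comparable x hx y hy hxy).imp (·.of_eqOn S.mapsTo_par hpar hy)
    (·.of_eqOn S.mapsTo_par hpar hx)

theorem hasNormalSpanningTree (h : IsNormalTreeOrder H le) (hH : H.Connected) :
    HasNormalSpanningTree H := by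
  obtain ⟨r⟩ := hH.nonempty
  exact ⟨_, r, isNormalSpanningTree_parentTree limitPar_root (fun _ => adj_limitPar)
    (fun _ => limitDep_limitPar_lt (h := h) (hH := hH)) fun _ _ => limitPar_comparable⟩

end IsNormalTreeOrder

/-- Having a normal spanning tree is closed under taking connected minors. -/
theorem stmt3 {V : Type v} {W : Type w} (G : SimpleGraph V) (H : SimpleGraph W)
    (hG : HasNormalSpanningTree G) (hH : H.Connected) (hm : IsMinor H G) :
    HasNormalSpanningTree H := by
  obtain ⟨T, r, hT⟩ := hG
  obtain ⟨M⟩ := hm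
  obtain ⟨le, hle⟩ := M.exists_isNormalTreeOrder hT.isNormalTreeOrder
  exact hle.hasNormalSpanningTree hH
end

section
/- Let (T,≤) be an order tree and G a T-graph. For any two vertices t, t' that are incomparable in T, the set ⌈t⌉ ∩ ⌈t'⌉ (the intersection of their down-closures) separates t from t' in G. -/
open SimpleGraph

universe u

/-- `(T,≤)` is an order tree: it has a unique minimal element (the root, which then
lies below every element) and every down-set `⌈t⌉ = Iic t` is well-ordered. -/
def IsOrderTree (T : Type u) [PartialOrder T] : Prop :=
  (∃ r : T, ∀ t, r ≤ t) ∧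
  ∀ t : T, IsChain (· ≤ ·) (Set.Iic t) ∧ (Set.Iic t).WellFoundedOn (· < ·)

/-- `G` is a `T`-graph: `V(G) = T`, the endvertices of every edge are comparable,
and the set of lower neighbours of each `t` is cofinal in `⌈t⌉ \ {t}`. -/
def IsTGraph {T : Type u} [PartialOrder T] (G : SimpleGraph T) : Prop :=
  (∀ ⦃x y : T⦄, G.Adj x y → x ≤ y ∨ y ≤ x) ∧
  ∀ t s : T, s < t → ∃ u : T, G.Adj u t ∧ u < t ∧ s ≤ u

/-- Going back along an edge `a ~ u` with `a ≤ u`, the lower bound `v` found for the rest of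
the walk and `a` both lie in the chain `⌈u⌉`, so the smaller of the two works. -/
theorem SimpleGraph.Walk.exists_mem_support_le_le {T : Type*} [PartialOrder T]
    {G : SimpleGraph T} (hIic : ∀ t : T, IsChain (· ≤ ·) (Set.Iic t))
    (hadj : ∀ ⦃x y : T⦄, G.Adj x y → x ≤ y ∨ y ≤ x) {a b : T} (p : G.Walk a b) :
    ∃ v ∈ p.support, v ≤ a ∧ v ≤ b := by
  induction p with
  | nil => exact ⟨_, Walk.start_mem_support _, le_rfl, le_rfl⟩
  | @cons a u b hau q ih =>
    obtain ⟨v, hv, hvu, hvb⟩ := ih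
    have hv' : v ∈ (cons hau q).support := List.mem_cons_of_mem _ hv
    rcases hadj hau with hle | hge
    · rcases (hIic u).total (Set.mem_Iic.2 hvu) (Set.mem_Iic.2 hle) with hva | hav
      · exact ⟨v, hv', hva, hvb⟩
      · exact ⟨a, (cons hau q).start_mem_support, le_rfl, hav.trans hvb⟩
    · exact ⟨v, hv', hvu.trans hge, hvb⟩

theorem stmt5_general {T : Type u} [PartialOrder T] (hT : IsOrderTree T) (G : SimpleGraph T)
    (hG : IsTGraph G) (t t' : T) :
    ∀ p : G.Walk t t', ∃ v ∈ p.support, v ∈ Set.Iic t ∩ Set.Iic t' :=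
  fun p => p.exists_mem_support_le_le (fun s => (hT.2 s).1) hG.1

/-- For incomparable `t, t'` the set `⌈t⌉ ∩ ⌈t'⌉` separates `t` from `t'` in `G`. -/
theorem stmt5 {T : Type u} [PartialOrder T] (hT : IsOrderTree T) (G : SimpleGraph T)
    (hG : IsTGraph G) (t t' : T) (h1 : ¬ t ≤ t') (h2 : ¬ t' ≤ t) :
    ∀ p : G.Walk t t', ∃ v ∈ p.support, v ∈ Set.Iic t ∩ Set.Iic t' :=
  stmt5_general hT G hG t t'
end

section
/- Let (T,≤) be an order tree and G a T-graph. Every nonempty connected subgraph of G has a unique T-minimal element. -/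
/-! A walk in `H` never leaves the up-set of a minimal vertex `m` of `H` once it is in it: stepping
up is harmless, and stepping down from `x ≥ m` to `y` lands in the chain `⌈x⌉`, where `y < m` is
ruled out by minimality. So two minimal vertices of a connected `H` lie above each other,
while one exists below any vertex `t` because `⌈t⌉` is well-founded. -/

open SimpleGraph

universe u

section

variable {T : Type u} [PartialOrder T]

theorem exists_le_minimal_of_wellFoundedOn_Iic {S : Set T} {t : T}
    (hwf : (Set.Iic t).WellFoundedOn (· < ·)) (ht : t ∈ S) : ∃ m ≤ t, Minimal (· ∈ S) m := by
  obtain ⟨m, ⟨hmt, hmS⟩, hmin⟩ :=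
    (hwf.subset Set.inter_subset_left).exists_minimal ⟨t, le_rfl, ht⟩
  exact ⟨m, hmt, hmS, fun c hcS hcm => hmin ⟨hcm.trans hmt, hcS⟩ hcm⟩

theorem Minimal.le_of_le_of_le_or_ge {S : Set T} {m x y : T} (hm : Minimal (· ∈ S) m)
    (hchain : IsChain (· ≤ ·) (Set.Iic x)) (hy : y ∈ S) (hmx : m ≤ x) (hxy : x ≤ y ∨ y ≤ x) :
    m ≤ y := by
  rcases hxy with hxy | hyx
  · exact hmx.trans hxy
  · rcases hchain.total (Set.mem_Iic.2 hmx) (Set.mem_Iic.2 hyx) with hmy | hym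
    · exact hmy
    · exact hm.2 hy hym

variable {G : SimpleGraph T} {H : G.Subgraph}
  (hcomp : ∀ ⦃x y : T⦄, G.Adj x y → x ≤ y ∨ y ≤ x) (hchain : ∀ t : T, IsChain (· ≤ ·) (Set.Iic t))
include hcomp hchain

theorem Minimal.le_of_walk {m : T} (hm : Minimal (· ∈ H.verts) m) {a b : H.verts}
    (w : H.coe.Walk a b) (ha : m ≤ a) : m ≤ b := by
  induction w with
  | nil => exact ha
  | @cons x y _ hxy _ ih =>
    exact ih (hm.le_of_le_of_le_or_ge (hchain x) y.2 ha (hcomp (H.adj_sub hxy)))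

theorem Minimal.eq_of_connected (hH : H.coe.Connected) {m m' : T}
    (hm : Minimal (· ∈ H.verts) m) (hm' : Minimal (· ∈ H.verts) m') : m = m' :=
  le_antisymm
    (hm.le_of_walk hcomp hchain (hH ⟨m, hm.1⟩ ⟨m', hm'.1⟩).some le_rfl)
    (hm'.le_of_walk hcomp hchain (hH ⟨m', hm'.1⟩ ⟨m, hm.1⟩).some le_rfl)

end

/-- Every nonempty connected subgraph of a `T`-graph has a unique `T`-minimal element. -/
theorem stmt6 {T : Type u} [PartialOrder T] (hT : IsOrderTree T) (G : SimpleGraph T)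
    (hG : IsTGraph G) (H : G.Subgraph) (hH : H.coe.Connected) :
    ∃! m : T, m ∈ H.verts ∧ ∀ c ∈ H.verts, c ≤ m → c = m := by
  obtain ⟨⟨t, ht⟩⟩ := hH.nonempty
  obtain ⟨m, -, hm⟩ := exists_le_minimal_of_wellFoundedOn_Iic (hT.2 t).2 ht
  refine ⟨m, ⟨hm.1, fun c hc hcm => hm.eq_of_le hc hcm⟩, fun m' hm' => ?_⟩
  have hm'min : Minimal (· ∈ H.verts) m' := ⟨hm'.1, fun c hc hcm => (hm'.2 c hc hcm).ge⟩
  exact hm'min.eq_of_connected hG.1 (fun t => (hT.2 t).1) hH hm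
end

section
/- Let G be a graph and let (H_i)_{i<ω₁} be an increasing ω₁-chain of subgraphs of G, each of which has finite adhesion in G. Then the union ⋃_{i<ω₁} H_i has finite adhesion in G. -/
open SimpleGraph

universe u v w

/-- `D` is (the vertex set of) a connected component of the induced subgraph of `G` on `A`. -/
def IsCompOf {V : Type u} (G : SimpleGraph V) (A D : Set V) : Prop :=
  D ⊆ A ∧ (G.induce D).Connected ∧
  ∀ D' : Set V, D ⊆ D' → D' ⊆ A → (G.induce D').Connected → D' = D

/-- The neighbourhood `N(D)` of a set `D`: all vertices outside `D` with a neighbour in `D`. -/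
def nbrSet {V : Type u} (G : SimpleGraph V) (D : Set V) : Set V :=
  {v : V | v ∉ D ∧ ∃ d ∈ D, G.Adj v d}

/-- The (induced) subgraph of `G` on the vertex set `S` has finite adhesion in `G`:
all components `D` of `G − S` have finite neighbourhood `N(D)`. -/
def FiniteAdhesion {V : Type u} (G : SimpleGraph V) (S : Set V) : Prop :=
  ∀ D : Set V, IsCompOf G Sᶜ D → (nbrSet G D).Finite

/-! Let D be a component of G − ⋃ Hᵢ. By maximality N(D) lies in ⋃ Hᵢ. If N(D) were
infinite, a countably infinite part of it would lie in a single H_j, since ω₁ has uncountable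
cofinality. The component of G − H_j containing D then has all these vertices in its
neighbourhood, contradicting the finite adhesion of H_j. -/

section Cofinality

open Cardinal

theorem bddAbove_of_mk_lt_cof {α : Type*} [LinearOrder α] {s : Set α}
    (hs : #s < Order.cof α) : BddAbove s :=
  BddAbove.of_not_isCofinal fun h => (Order.cof_le h).not_gt hs

theorem bddAbove_of_countable_aleph_one {s : Set (aleph 1).ord.ToType} (hs : s.Countable) :
    BddAbove s := by
  apply bddAbove_of_mk_lt_cof
  rw [Ordinal.cof_toType, isRegular_aleph_one.cof_ord]
  exact hs.le_aleph0.trans_lt aleph0_lt_aleph_one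

theorem Monotone.exists_subset_of_countable_subset_iUnion {ι α : Type*} [Preorder ι]
    (hι : ∀ t : Set ι, t.Countable → BddAbove t) {S : ι → Set α} (hS : Monotone S)
    {s : Set α} (hs : s.Countable) (hsS : s ⊆ ⋃ i, S i) : ∃ j, s ⊆ S j := by
  choose i hi using fun x : s => Set.mem_iUnion.1 (hsS x.2)
  have : Countable s := hs.to_subtype
  obtain ⟨j, hj⟩ := hι _ (Set.countable_range i)
  exact ⟨j, fun x hx => hS (hj ⟨⟨x, hx⟩, rfl⟩) (hi ⟨x, hx⟩)⟩

end Cofinality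

section Components

variable {V : Type u} {G : SimpleGraph V}

theorem connected_induce_insert {D : Set V} {v d : V} (hD : (G.induce D).Connected)
    (hd : d ∈ D) (hvd : G.Adj v d) : (G.induce (insert v D)).Connected := by
  rw [← Set.singleton_union]
  exact connected_induce_union Preconnected.of_subsingleton hD.preconnected rfl hd hvd

theorem IsCompOf.nbrSet_subset_compl {A D : Set V} (hD : IsCompOf G A D) :
    nbrSet G D ⊆ Aᶜ := by
  rintro v ⟨hvD, d, hd, hvd⟩ hvA
  have hins := hD.2.2 (insert v D) (Set.subset_insert v D) (Set.insert_subset hvA hD.1)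
    (connected_induce_insert hD.2.1 hd hvd)
  exact hvD (hins ▸ Set.mem_insert v D)

theorem exists_isCompOf_superset {A D : Set V} (hDA : D ⊆ A) (hD : (G.induce D).Connected) :
    ∃ M, D ⊆ M ∧ IsCompOf G A M := by
  -- No Zorn needed: all connected sets between `D` and `A` meet in `D`, so their union is one.
  set 𝓔 : Set (Set V) := {E | D ⊆ E ∧ E ⊆ A ∧ (G.induce E).Connected}
  have hD𝓔 : D ∈ 𝓔 := ⟨subset_rfl, hDA, hD⟩
  obtain ⟨⟨d, hd⟩⟩ := hD.nonempty
  have hconn : (G.induce (⋃₀ 𝓔)).Connected :=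
    induce_sUnion_connected_of_pairwise_not_disjoint ⟨D, hD𝓔⟩
      (fun hE hF => ⟨d, hE.1 hd, hF.1 hd⟩) (fun hE => hE.2.2)
  refine ⟨⋃₀ 𝓔, Set.subset_sUnion_of_mem hD𝓔,
    Set.sUnion_subset fun E hE => hE.2.1, hconn, fun E hME hEA hE => ?_⟩
  have hE𝓔 : E ∈ 𝓔 := ⟨(Set.subset_sUnion_of_mem hD𝓔).trans hME, hEA, hE⟩
  exact (Set.subset_sUnion_of_mem hE𝓔).antisymm hME

theorem nbrSet_diff_subset_nbrSet {D M : Set V} (hDM : D ⊆ M) :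
    nbrSet G D \ M ⊆ nbrSet G M := fun _ ⟨⟨_, d, hd, hvd⟩, hvM⟩ => ⟨hvM, d, hDM hd, hvd⟩

end Components

/-- An increasing `ω₁`-chain of subgraphs of finite adhesion has union of finite adhesion. -/
theorem stmt7 {V : Type u} (G : SimpleGraph V)
    (H : (Cardinal.aleph 1 : Cardinal.{u}).ord.ToType → G.Subgraph)
    (hmono : Monotone H)
    (hfin : ∀ i, FiniteAdhesion G (H i).verts) :
    FiniteAdhesion G (⨆ i, H i).verts := by
  intro D hD
  refine Set.not_infinite.1 fun hinf => ?_
  set s : Set V := Set.range fun n => (hinf.natEmbedding _ n : V)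
  have hsD : s ⊆ nbrSet G D := Set.range_subset_iff.2 fun n => (hinf.natEmbedding _ n).2
  have hs : s.Infinite := Set.infinite_range_of_injective
    (Subtype.val_injective.comp (hinf.natEmbedding _).injective)
  have hsUnion : s ⊆ ⋃ i, (H i).verts := by
    simpa [Subgraph.verts_iSup] using hsD.trans hD.nbrSet_subset_compl
  have hverts : Monotone fun i => (H i).verts := fun _ _ hij => Subgraph.verts_mono (hmono hij)
  obtain ⟨j, hsj⟩ := hverts.exists_subset_of_countable_subset_iUnion
    (fun _ => bddAbove_of_countable_aleph_one) (Set.countable_range _) hsUnion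
  have hDj : D ⊆ (H j).vertsᶜ := hD.1.trans
    (Set.compl_subset_compl.2 (Subgraph.verts_mono (le_iSup H j)))
  obtain ⟨M, hDM, hM⟩ := exists_isCompOf_superset hDj hD.2.1
  refine hs ((hfin j M hM).subset fun x hx => nbrSet_diff_subset_nbrSet hDM ⟨hsD hx, ?_⟩)
  exact fun hxM => hM.1 hxM (hsj hx)
end

section
/- Let G be a connected graph that contains no uncountable clique K^{ω₁} as a minor. Then every branch of any normal partition tree T for G is at most countable; in particular, every partition class V_t is at most countable. -/
/-!
A maximal chain of an order tree is down-closed and well-ordered, so an uncountable one has an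
initial segment of type `ω₁`, on which the contraction `G/T` is a graph in which the lower
neighbours of every vertex are cofinal below it. In such a graph on `ω₁` every interval `[a, c]` is
connected, and above every point there is a vertex with neighbours arbitrarily high. A transfinite
recursion then picks disjoint intervals `[a_α, c_α]`, with `a_α` above all earlier `c_β` and `c_α`
such a vertex lying above a neighbour of each earlier `c_β`. They form a `K^{ω₁}` minor of `G/T`,
and, expanding each vertex into its connected partition class, of `G`.

Finally `|V_t|` is `1` or `cf(height t) ≤ |⌈t⌉|`, and `⌈t⌉` lies in a maximal chain.
-/

open SimpleGraph

universe u v w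

/-- The contraction `Ġ = G/T` of `G` determined by the partition `P` of its vertex set:
two partition classes are adjacent iff `G` has an edge between them. -/
def quotientGraph {V : Type u} {T : Type v} (G : SimpleGraph V) (P : T → Set V) :
    SimpleGraph T where
  Adj t t' := t ≠ t' ∧ ∃ u ∈ P t, ∃ v ∈ P t', G.Adj u v
  symm := by
    constructor
    rintro t t' ⟨hne, u, hu, v, hv, huv⟩
    exact ⟨hne.symm, v, hv, u, hu, huv.symm⟩
  loopless := by
    constructor
    rintro t ⟨hne, -⟩
    exact hne rfl

/-- The cofinality of the height of `t`, i.e. of the order type of `⌈t⌉ \ {t}`: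
the least cardinality of a cofinal subset of the set of points strictly below `t`. -/
noncomputable def cofBelow {T : Type u} [PartialOrder T] (t : T) : Cardinal.{u} :=
  sInf {c : Cardinal.{u} | ∃ s : Set T, s ⊆ Set.Iio t ∧ (∀ x < t, ∃ y ∈ s, x ≤ y) ∧
    Cardinal.mk s = c}

/-- `P` is a normal partition tree for `G`, indexed by the order tree `T`:
the partition classes are nonempty, pairwise disjoint and cover `V(G)`;
the contraction `G/T` is a `T`-graph; each class is connected in `G`; and each class
has exactly one element or exactly `cf(height t)` many. -/
structure IsNormalPartitionTree {V : Type u} {T : Type u} [PartialOrder T]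
    (G : SimpleGraph V) (P : T → Set V) : Prop where
  orderTree : IsOrderTree T
  nonempty : ∀ t, (P t).Nonempty
  disjoint : ∀ ⦃t t'⦄, t ≠ t' → Disjoint (P t) (P t')
  cover : (⋃ t, P t) = Set.univ
  tgraph : IsTGraph (quotientGraph G P)
  connected : ∀ t, (G.induce (P t)).Connected
  size : ∀ t, Cardinal.mk (P t) = cofBelow t ∨ Cardinal.mk (P t) = 1

open Set Cardinal

def LowerNeighboursCofinal {T : Type*} [Preorder T] (H : SimpleGraph T) : Prop :=
  ∀ t s : T, s < t → ∃ u, H.Adj u t ∧ u < t ∧ s ≤ u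

theorem LowerNeighboursCofinal.comap {Ω T : Type*} [LinearOrder Ω] [PartialOrder T]
    {H : SimpleGraph T} (hH : LowerNeighboursCofinal H) {f : Ω → T} (hf : StrictMono f)
    (hrange : ∀ t, Iio (f t) ⊆ range f) : LowerNeighboursCofinal (H.comap f) := by
  intro t s hst
  obtain ⟨u', hadj, hu't, hsu'⟩ := hH (f t) (f s) (hf hst)
  obtain ⟨u, rfl⟩ := hrange t hu't
  exact ⟨u, hadj, hf.lt_iff_lt.1 hu't, hf.le_iff_le.1 hsu'⟩

theorem LowerNeighboursCofinal.induce_Icc_connected {Ω : Type*} [PartialOrder Ω]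
    [WellFoundedLT Ω] {H : SimpleGraph Ω} (hH : LowerNeighboursCofinal H) {a b : Ω} (hab : a ≤ b) :
    (H.induce (Icc a b)).Connected := by
  have ha : a ∈ Icc a b := ⟨le_rfl, hab⟩
  have reach : ∀ x (hx : x ∈ Icc a b), (H.induce (Icc a b)).Reachable ⟨x, hx⟩ ⟨a, ha⟩ := by
    intro x
    induction x using WellFoundedLT.induction with
    | ind x ih =>
      intro hx
      obtain rfl | hax := hx.1.eq_or_lt
      · rfl
      obtain ⟨u, hadj, hux, hau⟩ := hH x a hax
      have hu : u ∈ Icc a b := ⟨hau, hux.le.trans hx.2⟩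
      have hedge : (H.induce (Icc a b)).Adj ⟨u, hu⟩ ⟨x, hx⟩ := hadj
      exact hedge.reachable.symm.trans (ih u hux hu)
  rw [connected_iff]
  exact ⟨fun u v => (reach u u.2).trans (reach v v.2).symm, ⟨⟨a, ha⟩⟩⟩

theorem exists_forall_lt_of_countable {Ω : Type*} [LinearOrder Ω] (hcof : ℵ₀ < Order.cof Ω)
    {s : Set Ω} (hs : s.Countable) : ∃ z, ∀ x ∈ s, x < z :=
  not_isCofinal_iff.1 fun hcofinal =>
    (Order.cof_le hcofinal).not_gt (hcof.trans_le' (le_aleph0_iff_set_countable.2 hs))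

theorem exists_gt_not_bddAbove_neighborSet {Ω : Type*} [LinearOrder Ω] [WellFoundedLT Ω]
    (hIio : ∀ x : Ω, (Iio x).Countable) (hcof : ℵ₀ < Order.cof Ω) {H : SimpleGraph Ω}
    (hH : LowerNeighboursCofinal H) (δ : Ω) : ∃ c, δ < c ∧ ¬ BddAbove (H.neighborSet c) := by
  by_contra! hbdd
  choose! g hg using hbdd
  choose nxt hnxt using fun p : Ω =>
    exists_forall_lt_of_countable hcof (((hIio p).image g).insert p)
  obtain ⟨z₀, hz₀⟩ := exists_forall_lt_of_countable hcof (countable_singleton δ)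
  -- `lam` is an increasing sequence closed under `g`; its least strict upper bound `m` has a lower
  -- neighbour `u ≤ lam n`, whence `m ≤ g u < lam (n + 2) < m`.
  set lam : ℕ → Ω := fun n => nxt^[n] z₀
  have lam_succ (n : ℕ) : lam (n + 1) = nxt (lam n) := Function.iterate_succ_apply' nxt n z₀
  have lam_lt_succ (n : ℕ) : lam n < lam (n + 1) := lam_succ n ▸ hnxt _ _ (mem_insert _ _)
  obtain ⟨m, hm, hmin⟩ := wellFounded_lt.has_min {z | ∀ n, lam n < z} <|
    let ⟨z, hz⟩ := exists_forall_lt_of_countable hcof (countable_range lam)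
    ⟨z, fun n => hz _ ⟨n, rfl⟩⟩
  obtain ⟨u, hum, hu, hu₀⟩ := hH m (lam 0) (hm 0)
  obtain ⟨n, hun⟩ : ∃ n, u ≤ lam n := by
    by_contra! h
    exact hmin u h hu
  have hmg : m ≤ g u := hg u ((hz₀ δ rfl).trans_le hu₀) hum
  have hgu : g u < lam (n + 2) :=
    lam_succ (n + 1) ▸ hnxt _ _ (mem_insert_of_mem _ ⟨u, hun.trans_lt (lam_lt_succ n), rfl⟩)
  exact (hmg.trans_lt hgu).not_ge (hm (n + 2)).le

theorem exists_forall_eq_image_Iio {α β : Type*} [Preorder α] [WellFoundedLT α] (F : Set β → β) :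
    ∃ c : α → β, ∀ a, c a = F (c '' Iio a) :=
  ⟨wellFounded_lt.fix fun a prev => F (range fun b : Iio a => prev b b.2), fun a => by
    rw [WellFounded.fix_eq, image_eq_range]⟩

def MinorMap.ofIcc {ι Ω : Type*} [LinearOrder ι] [PartialOrder Ω] [WellFoundedLT Ω]
    {H : SimpleGraph Ω} (hH : LowerNeighboursCofinal H) (a c : ι → Ω) (hac : ∀ i, a i ≤ c i)
    (hlt : ∀ ⦃i j⦄, i < j → c i < a j)
    (hadj : ∀ ⦃i j⦄, i < j → ∃ y ∈ Icc (a j) (c j), H.Adj (c i) y) :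
    MinorMap (⊤ : SimpleGraph ι) H where
  branch i := Icc (a i) (c i)
  branch_nonempty i := nonempty_Icc.2 (hac i)
  branch_connected i := hH.induce_Icc_connected (hac i)
  branch_disjoint i j hij := by
    rw [Set.disjoint_left]
    rintro z ⟨hz₁, hz₂⟩ ⟨hz₃, hz₄⟩
    rcases hij.lt_or_gt with h | h
    · exact (hz₂.trans_lt ((hlt h).trans_le hz₃)).false
    · exact (hz₄.trans_lt ((hlt h).trans_le hz₁)).false
  branch_adj i j hij := by
    rcases (top_adj i j).1 hij |>.lt_or_gt with h | h
    · obtain ⟨y, hy, hadj⟩ := hadj h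
      exact ⟨c i, ⟨hac i, le_rfl⟩, y, hy, hadj⟩
    · obtain ⟨y, hy, hadj⟩ := hadj h
      exact ⟨y, hy, c j, ⟨hac j, le_rfl⟩, hadj.symm⟩

theorem exists_minorMap_top {Ω : Type*} [LinearOrder Ω] [WellFoundedLT Ω]
    (hIio : ∀ x : Ω, (Iio x).Countable) (hcof : ℵ₀ < Order.cof Ω) {H : SimpleGraph Ω}
    (hH : LowerNeighboursCofinal H) : Nonempty (MinorMap (⊤ : SimpleGraph Ω) H) := by
  classical
  obtain ⟨z₀, -⟩ := exists_forall_lt_of_countable hcof (countable_empty (α := Ω))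
  choose ub hub using fun s : Set Ω =>
    if hs : s.Countable then (exists_forall_lt_of_countable hcof hs).imp fun _ h _ => h
    else (⟨z₀, fun h => absurd h hs⟩ : ∃ z, s.Countable → ∀ x ∈ s, x < z)
  choose up hup using fun c b : Ω =>
    if hc : BddAbove (H.neighborSet c) then
      (⟨b, fun h => absurd hc h⟩ : ∃ y, ¬ BddAbove (H.neighborSet c) → b < y ∧ H.Adj c y)
    else (not_bddAbove_iff.1 hc b).imp fun _ h _ => h.symm
  choose unbdd hunbdd using exists_gt_not_bddAbove_neighborSet hIio hcof hH
  -- `a α` bounds all earlier `c β`, and `c α` has unbounded neighbourhood and lies above `a α` and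
  -- above a neighbour `up (c β) (a α) > a α` of each earlier `c β`.
  obtain ⟨c, hc⟩ := exists_forall_eq_image_Iio (α := Ω)
    fun C => unbdd (ub (insert (ub C) ((up · (ub C)) '' C)))
  set a : Ω → Ω := fun α => ub (c '' Iio α)
  have hC (α : Ω) : (c '' Iio α).Countable := (hIio α).image c
  have hS (α : Ω) : (insert (a α) ((up · (a α)) '' (c '' Iio α))).Countable :=
    ((hC α).image _).insert _
  have hc_unbdd (α : Ω) : ¬ BddAbove (H.neighborSet (c α)) := by
    rw [hc α]; exact (hunbdd _).2
  have hub_lt (α : Ω) : ub (insert (a α) ((up · (a α)) '' (c '' Iio α))) < c α := by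
    rw [hc α]; exact (hunbdd _).1
  refine ⟨MinorMap.ofIcc hH a c (fun α => ?_) (fun β α hβ => ?_) (fun β α hβ => ?_)⟩
  · exact ((hub _ (hS α) _ (mem_insert _ _)).trans (hub_lt α)).le
  · exact hub _ (hC α) _ (mem_image_of_mem c hβ)
  · obtain ⟨hy, hadj⟩ := hup (c β) (a α) (hc_unbdd β)
    refine ⟨up (c β) (a α), ⟨hy.le, ?_⟩, hadj⟩
    exact ((hub _ (hS α) _ (mem_insert_of_mem _ ⟨c β, mem_image_of_mem c hβ, rfl⟩)).trans
      (hub_lt α)).le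

theorem induce_biUnion_connected {V T : Type*} (G : SimpleGraph V) {P : T → Set V}
    (hne : ∀ t, (P t).Nonempty) (hconn : ∀ t, (G.induce (P t)).Connected) {D : Set T}
    (hD : ((quotientGraph G P).induce D).Connected) : (G.induce (⋃ t ∈ D, P t)).Connected := by
  set U := ⋃ t ∈ D, P t
  have hsub {t : T} (ht : t ∈ D) : P t ⊆ U := subset_biUnion_of_mem ht
  have reach : ∀ (t t' : D) (_ : ((quotientGraph G P).induce D).Walk t t'),
      ∀ u (hu : u ∈ P t) v (hv : v ∈ P t'),
      (G.induce U).Reachable ⟨u, hsub t.2 hu⟩ ⟨v, hsub t'.2 hv⟩ := by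
    intro t t' w
    induction w with
    | @nil t =>
      intro u hu v hv
      exact ((hconn _).preconnected ⟨u, hu⟩ ⟨v, hv⟩).map (G.induceHomOfLE (hsub t.2)).toHom
    | @cons t s t' hts _ ih =>
      obtain ⟨-, a, ha, b, hb, hab⟩ := hts
      intro u hu v hv
      have hedge : (G.induce U).Adj ⟨a, hsub t.2 ha⟩ ⟨b, hsub s.2 hb⟩ := hab
      exact (((hconn _).preconnected ⟨u, hu⟩ ⟨a, ha⟩).map
        (G.induceHomOfLE (hsub t.2)).toHom).trans (hedge.reachable.trans (ih b hb v hv))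
  rw [connected_iff]
  refine ⟨?_, ?_⟩
  · rintro ⟨u, hu⟩ ⟨v, hv⟩
    obtain ⟨t, ht, hut⟩ := mem_iUnion₂.1 hu
    obtain ⟨t', ht', hvt'⟩ := mem_iUnion₂.1 hv
    exact reach ⟨t, ht⟩ ⟨t', ht'⟩ (hD.preconnected _ _).some u hut v hvt'
  · obtain ⟨⟨t, ht⟩⟩ := hD.nonempty
    obtain ⟨u, hu⟩ := hne t
    exact ⟨⟨u, hsub ht hu⟩⟩

def MinorMap.ofQuotient {W V T : Type*} {K : SimpleGraph W} {G : SimpleGraph V} {P : T → Set V}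
    (hne : ∀ t, (P t).Nonempty) (hdisj : ∀ ⦃t t'⦄, t ≠ t' → Disjoint (P t) (P t'))
    (hconn : ∀ t, (G.induce (P t)).Connected) (M : MinorMap K (quotientGraph G P)) :
    MinorMap K G where
  branch x := ⋃ t ∈ M.branch x, P t
  branch_nonempty x :=
    let ⟨t, ht⟩ := M.branch_nonempty x
    let ⟨u, hu⟩ := hne t
    ⟨u, mem_biUnion ht hu⟩
  branch_connected x := induce_biUnion_connected G hne hconn (M.branch_connected x)
  branch_disjoint x y hxy := by
    simp only [disjoint_iUnion_left, disjoint_iUnion_right]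
    intro t ht t' ht'
    exact hdisj ((M.branch_disjoint hxy).ne_of_mem ht' ht)
  branch_adj x y hxy :=
    let ⟨t, ht, t', ht', _, u, hu, v, hv, huv⟩ := M.branch_adj hxy
    ⟨u, mem_biUnion ht hu, v, mem_biUnion ht' hv, huv⟩

theorem quotientGraph_comp {V T Ω : Type*} (G : SimpleGraph V) (P : T → Set V) {f : Ω → T}
    (hf : Function.Injective f) : quotientGraph G (P ∘ f) = (quotientGraph G P).comap f := by
  ext x y
  simp [quotientGraph, hf.ne_iff]

theorem wellFoundedLT_of_wellFoundedOn_Iic {T : Type*} [Preorder T]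
    (h : ∀ t : T, (Iic t).WellFoundedOn (· < ·)) : WellFoundedLT T :=
  ⟨⟨fun t => (WellFoundedOn.acc_iff_wellFoundedOn.out 0 2).2 <| (h t).subset fun b hb => by
    rw [mem_ofPred_eq, Relation.transGen_eq_self] at hb
    exact hb.le⟩⟩

theorem IsMaxChain.isLowerSet {T : Type*} [Preorder T] (hT : ∀ t : T, IsChain (· ≤ ·) (Iic t))
    {B : Set T} (hB : IsMaxChain (· ≤ ·) B) : IsLowerSet B := by
  intro t x hxt htB
  have hchain : IsChain (· ≤ ·) (insert x B) := hB.1.insert fun q hq _ => by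
    rcases hB.1.total htB hq with htq | hqt
    · exact Or.inl (hxt.trans htq)
    · exact (hT t).total hxt hqt
  exact hB.2 hchain (subset_insert x B) ▸ mem_insert x B

theorem exists_strictMono_ord_aleph_one {T : Type u} [PartialOrder T] [WellFoundedLT T]
    {B : Set T} (hB : IsChain (· ≤ ·) B) (hlow : IsLowerSet B) (hunc : ¬ B.Countable) :
    ∃ f : (aleph 1 : Cardinal.{u}).ord.ToType → T, StrictMono f ∧ ∀ t, Iio (f t) ⊆ range f := by
  classical
  let := hB.linearOrder
  obtain ⟨g⟩ : Nonempty ((aleph 1 : Cardinal.{u}).ord.ToType ≤i B) := by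
    rw [← Ordinal.type_le_iff, Ordinal.type_toType, ord_le, Ordinal.card_type, aleph_one_le_iff]
    exact lt_of_not_ge fun h => hunc (le_aleph0_iff_set_countable.1 h)
  refine ⟨fun x => g x, fun x y h => g.strictMono h, fun t x hx => ?_⟩
  obtain ⟨y, hy⟩ := g.mem_range_of_le (b := ⟨x, hlow hx.le (g t).2⟩) hx.le
  exact ⟨y, congrArg Subtype.val hy⟩

theorem countable_Iio_toType_ord_aleph_one (x : (aleph 1 : Cardinal.{u}).ord.ToType) :
    (Iio x).Countable :=
  le_aleph0_iff_set_countable.1 <| lt_aleph_one_iff.1 <| by simpa using mk_Iio_lt x (by simp)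

theorem aleph0_lt_cof_toType_ord_aleph_one :
    ℵ₀ < Order.cof (aleph 1 : Cardinal.{u}).ord.ToType := by
  rw [Ordinal.cof_toType, isRegular_aleph_one.cof_ord]
  exact aleph0_lt_aleph_one

theorem IsNormalPartitionTree.countable_of_countable_Iio {V T : Type u} [PartialOrder T]
    {G : SimpleGraph V} {P : T → Set V} (hP : IsNormalPartitionTree G P) {t : T}
    (ht : (Iio t).Countable) : (P t).Countable := by
  have hcof : cofBelow t ≤ #(Iio t) :=
    csInf_le' ⟨Iio t, subset_rfl, fun x hx => ⟨x, hx, le_rfl⟩, rfl⟩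
  rw [← le_aleph0_iff_set_countable]
  rcases hP.size t with h | h <;> rw [h]
  exacts [hcof.trans (le_aleph0_iff_set_countable.2 ht), one_le_aleph0]

theorem stmt9_general {V : Type u} {T : Type u} [PartialOrder T] (G : SimpleGraph V)
    (hK : ¬ IsMinor (⊤ : SimpleGraph (Cardinal.aleph 1 : Cardinal.{u}).ord.ToType) G)
    (P : T → Set V) (hP : IsNormalPartitionTree G P) :
    (∀ B : Set T, IsMaxChain (· ≤ ·) B → B.Countable) ∧ (∀ t, (P t).Countable) := by
  have := wellFoundedLT_of_wellFoundedOn_Iic fun t => (hP.orderTree.2 t).2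
  have hchains (B : Set T) (hB : IsMaxChain (· ≤ ·) B) : B.Countable := by
    by_contra hunc
    obtain ⟨f, hf, hrange⟩ := exists_strictMono_ord_aleph_one hB.1
      (hB.isLowerSet fun t => (hP.orderTree.2 t).1) hunc
    have hcofinal : LowerNeighboursCofinal (quotientGraph G (P ∘ f)) := by
      rw [quotientGraph_comp G P hf.injective]
      exact LowerNeighboursCofinal.comap hP.tgraph.2 hf hrange
    obtain ⟨M⟩ := exists_minorMap_top countable_Iio_toType_ord_aleph_one
      aleph0_lt_cof_toType_ord_aleph_one hcofinal
    exact hK ⟨M.ofQuotient (fun _ => hP.nonempty _) (fun _ _ h => hP.disjoint (hf.injective.ne h))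
      (fun _ => hP.connected _)⟩
  refine ⟨hchains, fun t => hP.countable_of_countable_Iio ?_⟩
  obtain ⟨B, hB, hsub⟩ := (hP.orderTree.2 t).1.exists_maxChain
  exact (hchains B hB).mono (Iio_subset_Iic_self.trans hsub)

/-- In a graph with no `K^{ω₁}` minor, every branch (maximal chain) of a normal partition
tree is countable; in particular every partition class is countable. -/
theorem stmt9 {V : Type u} {T : Type u} [PartialOrder T] (G : SimpleGraph V)
    (hG : G.Connected)
    (hK : ¬ IsMinor (⊤ : SimpleGraph (Cardinal.aleph 1 : Cardinal.{u}).ord.ToType) G)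
    (P : T → Set V) (hP : IsNormalPartitionTree G P) :
    (∀ B : Set T, IsMaxChain (· ≤ ·) B → B.Countable) ∧ (∀ t, (P t).Countable) :=
  stmt9_general G hK P hP
end

section
/- Let H ⊆ G be a subgraph of finite adhesion. If T ⊆ G is a rooted tree containing V(H) cofinally, then every component D of G − H satisfies |V(D) ∩ V(T)| < ∞. -/
open SimpleGraph

universe u v w

/-- A rooted tree inside the graph `G`. -/
structure RootedTreeIn {V : Type u} (G : SimpleGraph V) where
  sub : G.Subgraph
  root : V
  root_mem : root ∈ sub.verts
  isTree : sub.coe.IsTree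

/-- The tree-order of a rooted tree in `G`: `x ≤ y` iff both lie in the tree and
`x` lies on every path of the tree from the root to `y`. -/
def RootedTreeIn.le {V : Type u} {G : SimpleGraph V} (R : RootedTreeIn G) (x y : V) : Prop :=
  ∃ (hx : x ∈ R.sub.verts) (hy : y ∈ R.sub.verts),
    ∀ p : R.sub.coe.Walk ⟨R.root, R.root_mem⟩ ⟨y, hy⟩, p.IsPath →
      (⟨x, hx⟩ : R.sub.verts) ∈ p.support

/-- A rooted tree in `G` is normal if the endvertices of every `T`-path of `G`
(a path with endvertices in the tree, but all edges and inner vertices outside it)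
are comparable in its tree-order. -/
def RootedTreeIn.IsNormalIn {V : Type u} {G : SimpleGraph V} (R : RootedTreeIn G) : Prop :=
  ∀ ⦃x y : V⦄ (p : G.Walk x y), p.IsPath →
    x ∈ R.sub.verts → y ∈ R.sub.verts →
    (∀ v ∈ p.support, v ≠ x → v ≠ y → v ∉ R.sub.verts) →
    (∀ e ∈ p.edges, e ∉ R.sub.edgeSet) →
    (R.le x y ∨ R.le y x)

/-- The rooted tree `R` contains the vertex set `U` cofinally. -/
def RootedTreeIn.ContainsCofinally {V : Type u} {G : SimpleGraph V} (R : RootedTreeIn G)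
    (U : Set V) : Prop :=
  U ⊆ R.sub.verts ∧ ∀ x ∈ R.sub.verts, ∃ u ∈ U, R.le x u

/-- `X` separates `A` from `B` in `G`: every walk from `A` to `B` meets `X`. -/
def Separates {V : Type u} (G : SimpleGraph V) (X A B : Set V) : Prop :=
  ∀ ⦃a b : V⦄, a ∈ A → b ∈ B → ∀ p : G.Walk a b, ∃ v ∈ p.support, v ∈ X

/-- `U` is dispersed in `G`: every ray of `G` can be separated from `U`
by a finite set of vertices. -/
def Dispersed {V : Type u} (G : SimpleGraph V) (U : Set V) : Prop :=
  ∀ f : ℕ → V, Function.Injective f → (∀ n, G.Adj (f n) (f (n + 1))) →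
    ∃ X : Set V, X.Finite ∧ Separates G X U (Set.range f)

/-!
A vertex `t` of `D ∩ T` lies below some vertex of `H`, which is outside `D`; the tree path from
`t` up to that vertex leaves `D` through a vertex of `N(D)`, and `t` lies below it too. So
`D ∩ T` is contained in the down-closure of the finite set `N(D)` in the tree-order, and every
down-closure of a vertex `n` is finite, being the vertex set of the root path to `n`.
-/

namespace RootedTreeIn

variable {V : Type u} {G : SimpleGraph V} (R : RootedTreeIn G)

theorem le_of_mem_support {y : R.sub.verts} (P : R.sub.coe.Walk ⟨R.root, R.root_mem⟩ y)
    (hP : P.IsPath) {x : R.sub.verts} (hx : x ∈ P.support) : R.le x y :=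
  ⟨x.2, y.2, fun p hp => by
    obtain rfl : p = P :=
      congrArg Subtype.val ((R.isTree.isAcyclic.subsingleton_path _ _).elim ⟨p, hp⟩ ⟨P, hP⟩)
    exact hx⟩

theorem finite_setOf_le (y : V) : {x | R.le x y}.Finite := by
  by_cases hy : y ∈ R.sub.verts
  · obtain ⟨p, hp, -⟩ := R.isTree.existsUnique_path ⟨R.root, R.root_mem⟩ ⟨y, hy⟩
    refine (p.support.map Subtype.val).finite_toSet.subset ?_
    rintro x ⟨hx, _, hall⟩
    exact List.mem_map.mpr ⟨⟨x, hx⟩, hall p hp, rfl⟩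
  · exact Set.finite_empty.subset fun x ⟨_, hy', _⟩ => hy hy'

theorem exists_mem_nbrSet_le {D : Set V} {t u : V} (htu : R.le t u) (ht : t ∈ D) (hu : u ∉ D) :
    ∃ n ∈ nbrSet G D, R.le t n := by
  classical
  obtain ⟨htT, huT, hall⟩ := htu
  obtain ⟨p, hp, -⟩ := R.isTree.existsUnique_path ⟨R.root, R.root_mem⟩ ⟨u, huT⟩
  have htp := hall p hp
  let q := p.dropUntil _ htp
  obtain ⟨δ, hδ, hδD, hδD'⟩ := q.exists_boundary_dart {x | (x : V) ∈ D} ht hu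
  have hδq : δ.snd ∈ q.support := q.dart_snd_mem_support_of_mem_darts hδ
  -- the initial segment of `p` from the root through `t` to the exit vertex `δ.snd`
  let P := (p.takeUntil _ htp).append (q.takeUntil _ hδq)
  have hPp : P.append (q.dropUntil _ hδq) = p := by
    rw [← Walk.append_assoc, Walk.take_spec, Walk.take_spec]
  have hP : P.IsPath := Walk.IsPath.of_append_left (hPp ▸ hp)
  refine ⟨δ.snd, ⟨hδD', δ.fst, hδD, (R.sub.adj_sub δ.adj).symm⟩,
    R.le_of_mem_support P hP (x := ⟨t, htT⟩) ?_⟩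
  exact (Walk.mem_support_append_iff _ _).mpr (Or.inl (Walk.end_mem_support _))

theorem inter_verts_subset_biUnion_setOf_le {D U : Set V} (hcof : R.ContainsCofinally U)
    (hDU : Disjoint D U) : D ∩ R.sub.verts ⊆ ⋃ n ∈ nbrSet G D, {x | R.le x n} := by
  rintro t ⟨htD, htT⟩
  obtain ⟨u, huU, htu⟩ := hcof.2 t htT
  obtain ⟨n, hn, htn⟩ := R.exists_mem_nbrSet_le htu htD (hDU.notMem_of_mem_right huU)
  exact Set.mem_biUnion hn htn

end RootedTreeIn

/-- If `T` is a rooted tree containing the vertex set of a subgraph `H` of finite adhesion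
cofinally, then every component `D` of `G − H` meets `T` in only finitely many vertices. -/
theorem stmt13 {V : Type u} (G : SimpleGraph V) (H : G.Subgraph)
    (hH : FiniteAdhesion G H.verts)
    (R : RootedTreeIn G) (hcof : R.ContainsCofinally H.verts) :
    ∀ D : Set V, IsCompOf G H.vertsᶜ D → (D ∩ R.sub.verts).Finite := by
  intro D hD
  refine ((hH D hD).biUnion fun n _ => R.finite_setOf_le n).subset ?_
  exact R.inter_verts_subset_biUnion_setOf_le hcof (Set.subset_compl_iff_disjoint_right.mp hD.1)
end

section
/- Let λ be an infinite cardinal and let X be a (λ,λ⁺)-graph. Then every countably inflated IX graph H contains a fat TK^{ℵ₀} as a subgraph. -/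
open SimpleGraph

universe u v w

/-- A `(λ,λ⁺)`-graph: a bipartite graph `(A,B)` with `|A| = λ`, `|B| = λ⁺`
(for some infinite cardinal `λ`) in which every vertex of `B` has infinite degree. -/
def IsLambdaLambdaPlusGraph {W : Type u} (H : SimpleGraph W) : Prop :=
  ∃ (lam : Cardinal.{u}) (A B : Set W),
    Cardinal.aleph0 ≤ lam ∧
    A ∪ B = Set.univ ∧ Disjoint A B ∧
    (∀ ⦃x y⦄, H.Adj x y → (x ∈ A ∧ y ∈ B) ∨ (x ∈ B ∧ y ∈ A)) ∧
    Cardinal.mk A = lam ∧ Cardinal.mk B = Order.succ lam ∧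
    ∀ b ∈ B, (H.neighborSet b).Infinite

/-- A fat `TK^{ℵ₀}` in `G`: infinitely many branch vertices `h 0, h 1, h 2, …` together
with, for every pair of branch vertices, uncountably many paths between them which are
internally disjoint from each other and from all other such paths and branch vertices. -/
structure FatTK {V : Type u} (G : SimpleGraph V) where
  h : ℕ → V
  inj : Function.Injective h
  ι : Type u
  unc : ¬ Countable ι
  P : ∀ i j : ℕ, i < j → ι → G.Walk (h i) (h j)
  isPath : ∀ i j (hij : i < j) (k : ι), (P i j hij k).IsPath
  pinj : ∀ i j (hij : i < j), Function.Injective (P i j hij)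
  internal : ∀ i j (hij : i < j) (k : ι), ∀ v ∈ (P i j hij k).support,
      (∃ n, v = h n) → v = h i ∨ v = h j
  disj : ∀ i j (hij : i < j) (k : ι) i' j' (hij' : i' < j') (k' : ι),
      (i ≠ i' ∨ j ≠ j' ∨ k ≠ k') →
      ∀ v, v ∈ (P i j hij k).support → v ∈ (P i' j' hij' k').support → ∃ n, v = h n

/-- `G` contains a fat `TK^{ℵ₀}` (as a subgraph). -/
def HasFatTK {V : Type u} (G : SimpleGraph V) : Prop :=
  Nonempty (FatTK G)

/-!
Write `U` for the union of the branch sets of `A`; it has size at most `λ`. Every `b ∈ B` has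
infinitely many neighbours in `A`, so for any finite set `F` of already used vertices of `A`
we can pick a vertex `u ∈ U` outside the branch sets of `F` that is adjacent to the branch set
of `b`. As `|U| ≤ λ < |S|` for any `S ⊆ B` of size `λ⁺`, one such `u` serves `λ⁺` many `b ∈ S`.
Splitting these into two sets of size `λ⁺` and recursing on one of them yields distinct hubs
`w₀, w₁, …` and pairwise disjoint sets `T₀, T₁, …` of size `λ⁺` such that `wᵢ` sees the branch
set of every `b ∈ Tₙ` for `i ≤ n`. For `i < j` the branch sets of `ℵ₁` many `b ∈ T_{⟨i,j⟩}`
then carry pairwise internally disjoint `wᵢ`–`wⱼ` paths.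
-/

open Cardinal Function

theorem exists_seq_of_forall_exists {σ : Type*} {P : σ → Prop} {R : σ → σ → Prop} {s₀ : σ}
    (h₀ : P s₀) (h : ∀ s, P s → ∃ t, P t ∧ R s t) :
    ∃ s : ℕ → σ, s 0 = s₀ ∧ ∀ n, R (s n) (s (n + 1)) := by
  choose g hgP hgR using h
  let s : ℕ → {x // P x} := fun n => Nat.rec ⟨s₀, h₀⟩ (fun _ x => ⟨g x.1 x.2, hgP _ _⟩) n
  exact ⟨fun n => (s n).1, rfl, fun n => hgR _ _⟩

theorem Function.injective_of_mem_succ_of_notMem {α : Type*} {F : ℕ → Set α} {a : ℕ → α}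
    (hF : Monotone F) (hmem : ∀ n, a n ∈ F (n + 1)) (hnotMem : ∀ n, a n ∉ F n) :
    Injective a := by
  have key : ∀ i j, i < j → a i ≠ a j := fun i j hij h =>
    hnotMem j (h ▸ hF (Nat.succ_le_of_lt hij) (hmem i))
  intro i j h
  by_contra hne
  rcases Nat.lt_or_gt_of_ne hne with hij | hji
  exacts [key i j hij h, key j i hji h.symm]

theorem pairwise_disjoint_of_subset_of_disjoint_succ {α : Type*} {S T : ℕ → Set α}
    (hS : Antitone S) (hTS : ∀ n, T n ⊆ S n) (hdisj : ∀ n, Disjoint (T n) (S (n + 1))) :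
    Pairwise (Disjoint on T) :=
  (pairwise_disjoint_on T).mpr fun _ _ hij =>
    (hdisj _).mono_right ((hTS _).trans (hS (Nat.succ_le_of_lt hij)))

theorem injective_of_pairwise_disjoint_embedding {κ ι α : Type*} {T : κ → Set α}
    (hT : Pairwise (Disjoint on T)) (e : ∀ n, ι ↪ T n) :
    Injective fun p : κ × ι => (e p.1 p.2 : α) := by
  rintro ⟨n, k⟩ ⟨n', k'⟩ h
  obtain rfl : n = n' := by
    by_contra hne
    exact (hT hne).ne_of_mem (e n k).2 (e n' k').2 h
  simpa using (e n).injective (Subtype.ext h)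

theorem Set.Infinite.exists_disjoint_subsets_mk_eq {α : Type u} {s : Set α} (hs : s.Infinite) :
    ∃ t ⊆ s, ∃ t' ⊆ s, Disjoint t t' ∧ #t = #s ∧ #t' = #s := by
  have : Infinite s := hs.to_subtype
  obtain ⟨e⟩ : Nonempty (s ⊕ s ≃ s) := Cardinal.eq.mp (by simp [add_eq_self (aleph0_le_mk s)])
  have he : Injective fun x : s ⊕ s => (e x : α) := Subtype.val_injective.comp e.injective
  refine ⟨Set.range fun x => (e (.inl x) : α), Set.range_subset_iff.mpr fun x => (e _).2,
    Set.range fun x => (e (.inr x) : α), Set.range_subset_iff.mpr fun x => (e _).2, ?_,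
    mk_range_eq _ (he.comp Sum.inl_injective), mk_range_eq _ (he.comp Sum.inr_injective)⟩
  rw [Set.disjoint_range_iff]
  intro x y h
  exact Sum.inl_ne_inr (he h)

namespace Cardinal

theorem exists_lt_mk_fiber_of_lift_mk_le {α : Type u} {β : Type v} (f : α → β)
    {c : Cardinal.{u}} (hc : ℵ₀ ≤ c) (hα : c < #α) (hβ : lift.{u} #β ≤ lift.{v} c) :
    ∃ y, c < #(f ⁻¹' {y}) := by
  by_contra! hfib
  have : lift.{v} #α ≤ lift.{v} c :=
    calc lift.{v} #α ≤ lift.{u} #β * lift.{v} c :=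
          lift_mk_le_lift_mk_mul_of_lift_mk_preimage_le f fun y => lift_le.mpr (hfib y)
      _ ≤ lift.{v} c * lift.{v} c := mul_le_mul_left hβ _
      _ = lift.{v} c := mul_eq_self (aleph0_le_lift.mpr hc)
  exact (lift_lt.mpr hα).not_ge this

theorem lift_mk_biUnion_le_of_countable {ι : Type u} {α : Type v} (f : ι → Set α) {s : Set ι}
    (hs : ℵ₀ ≤ #s) (hf : ∀ i ∈ s, (f i).Countable) :
    lift.{u} #(⋃ i ∈ s, f i) ≤ lift.{v} #s :=
  calc lift.{u} #(⋃ i ∈ s, f i) ≤ lift.{v} #s * ⨆ i : s, lift.{u} #(f i) :=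
        mk_biUnion_le_lift f s
    _ ≤ lift.{v} #s * ℵ₀ :=
        mul_le_mul_right (ciSup_le' fun i : s => lift_le_aleph0.mpr (hf i i.2).le_aleph0) _
    _ = lift.{v} #s := mul_aleph0_eq (aleph0_le_lift.mpr hs)

theorem not_countable_out_aleph_one : ¬ Countable (ℵ₁ : Cardinal.{u}).out := by
  rw [← mk_le_aleph0_iff, mk_out, not_le]
  exact aleph0_lt_aleph_one

theorem nonempty_embedding_out_aleph_one {α : Type u} (hα : ℵ₀ < #α) :
    Nonempty ((ℵ₁ : Cardinal.{v}).out ↪ α) := by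
  rw [← lift_mk_le', mk_out, lift_aleph, Ordinal.lift_one, ← succ_aleph0, Order.succ_le_iff,
    aleph0_lt_lift]
  exact hα

end Cardinal

namespace SimpleGraph

variable {V : Type v} {G : SimpleGraph V}

theorem exists_isPath_support_subset_of_preconnected_induce {s : Set V}
    (hs : (G.induce s).Preconnected) {u v : V} (hu : u ∈ s) (hv : v ∈ s) :
    ∃ p : G.Walk u v, p.IsPath ∧ ∀ z ∈ p.support, z ∈ s := by
  classical
  obtain ⟨q⟩ := hs ⟨u, hu⟩ ⟨v, hv⟩
  let f := Embedding.induce (G := G) s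
  have hsupp : ∀ z ∈ (q.toPath.1.map f.toHom).support, z ∈ s := by
    rintro z hz
    rw [Walk.support_map, List.mem_map] at hz
    obtain ⟨z', -, rfl⟩ := hz
    exact z'.2
  exact ⟨q.toPath.1.map f.toHom, q.toPath.2.map f.injective, hsupp⟩

theorem exists_isPath_through_of_preconnected_induce {s : Set V}
    (hs : (G.induce s).Preconnected) {x y u v : V} (hx : x ∉ s) (hy : y ∉ s) (hxy : x ≠ y)
    (hu : u ∈ s) (hv : v ∈ s) (hxu : G.Adj x u) (hvy : G.Adj v y) :
    ∃ p : G.Walk x y, p.IsPath ∧ (∀ z ∈ p.support, z = x ∨ z = y ∨ z ∈ s) ∧ u ∈ p.support := by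
  obtain ⟨q, hq, hqs⟩ := exists_isPath_support_subset_of_preconnected_induce hs hu hv
  refine ⟨(q.concat hvy).cons hxu, (hq.concat (fun h => hy (hqs _ h)) hvy).cons ?_, ?_, by simp⟩
  · simp only [Walk.support_concat, List.mem_append, List.mem_singleton, not_or]
    exact ⟨fun h => hx (hqs _ h), hxy⟩
  · simp only [Walk.support_cons, Walk.support_concat, List.mem_cons, List.mem_append]
    rintro z (rfl | hz | rfl | hz)
    exacts [.inl rfl, .inr (.inr (hqs _ hz)), .inr (.inl rfl), absurd hz List.not_mem_nil]

end SimpleGraph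

theorem hasFatTK_of_connectors {V : Type v} {H : SimpleGraph V} {ι : Type v}
    (hι : ¬ Countable ι) (w : ℕ → V) (hw : Injective w) (R : ℕ × ℕ → ι → Set V)
    (hRconn : ∀ i j, i < j → ∀ k, (H.induce (R (i, j) k)).Preconnected)
    (hRdisj : Pairwise (Disjoint on uncurry R)) (hwR : ∀ n p k, w n ∉ R p k)
    (hadj : ∀ i j, i < j → ∀ k,
      (∃ u ∈ R (i, j) k, H.Adj (w i) u) ∧ ∃ v ∈ R (i, j) k, H.Adj (w j) v) :
    HasFatTK H := by
  have hpath : ∀ i j (hij : i < j) k, ∃ p : H.Walk (w i) (w j), p.IsPath ∧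
      (∀ z ∈ p.support, z = w i ∨ z = w j ∨ z ∈ R (i, j) k) ∧ ∃ z ∈ p.support, z ∈ R (i, j) k := by
    intro i j hij k
    obtain ⟨⟨u, hu, hiu⟩, v, hv, hjv⟩ := hadj i j hij k
    obtain ⟨p, hp, hps, hup⟩ := exists_isPath_through_of_preconnected_induce (hRconn i j hij k)
      (hwR _ _ _) (hwR _ _ _) (hw.ne hij.ne) hu hv hiu hjv.symm
    exact ⟨p, hp, hps, u, hup, hu⟩
  choose P hP hPs hPR using hpath
  refine ⟨⟨w, hw, ι, hι, P, hP, ?_, ?_, ?_⟩⟩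
  · intro i j hij k k' hkk'
    obtain ⟨z, hz, hzR⟩ := hPR i j hij k
    by_contra hne
    rcases hPs i j hij k' z (hkk' ▸ hz) with rfl | rfl | hzR'
    · exact hwR _ _ _ hzR
    · exact hwR _ _ _ hzR
    · exact Set.disjoint_left.mp (@hRdisj ((i, j), k) ((i, j), k') (by simpa))
        hzR hzR'
  · rintro i j hij k z hz ⟨n, rfl⟩
    rcases hPs i j hij k _ hz with h | h | h
    exacts [.inl h, .inr h, absurd h (hwR _ _ _)]
  · intro i j hij k i' j' hij' k' hne z hz hz'
    rcases hPs i j hij k z hz with rfl | rfl | h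
    · exact ⟨i, rfl⟩
    · exact ⟨j, rfl⟩
    rcases hPs i' j' hij' k' z hz' with rfl | rfl | h'
    · exact ⟨i', rfl⟩
    · exact ⟨j', rfl⟩
    refine absurd h' (Set.disjoint_left.mp (@hRdisj ((i, j), k) ((i', j'), k') ?_) h)
    simpa [and_assoc, or_iff_not_imp_left] using hne

namespace MinorMap

variable {W : Type u} {V : Type v} {X : SimpleGraph W} {H : SimpleGraph V} (m : MinorMap X H)
  {lam : Cardinal.{u}} {A B : Set W}

theorem exists_hub (hlam : ℵ₀ ≤ lam) (hBA : ∀ b ∈ B, X.neighborSet b ⊆ A)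
    (hdeg : ∀ b ∈ B, (X.neighborSet b).Infinite)
    (hU : lift.{u} #(⋃ a ∈ A, m.branch a) ≤ lift.{v} lam)
    {F S : Set W} (hF : F.Finite) (hSB : S ⊆ B) (hS : lam < #S) :
    ∃ a ∈ A \ F, ∃ w ∈ m.branch a, ∃ T ⊆ S, ∃ S' ⊆ S, Disjoint T S' ∧ lam < #T ∧ lam < #S' ∧
      ∀ b ∈ T ∪ S', ∃ v ∈ m.branch b, H.Adj w v := by
  have hchoice : ∀ b : S, ∃ a ∈ A \ F, ∃ u ∈ m.branch a, ∃ v ∈ m.branch b, H.Adj u v := by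
    rintro ⟨b, hb⟩
    obtain ⟨a, hab, haF⟩ := ((hdeg b (hSB hb)).sdiff hF).nonempty
    exact ⟨a, ⟨hBA b (hSB hb) hab, haF⟩, m.branch_adj (X.adj_symm hab)⟩
  choose a ha u hu v hv huv using hchoice
  let f : S → ⋃ a ∈ A, m.branch a := fun b => ⟨u b, Set.mem_biUnion (ha b).1 (hu b)⟩
  obtain ⟨w, hw⟩ := exists_lt_mk_fiber_of_lift_mk_le f hlam hS hU
  obtain ⟨⟨b₀, hb₀⟩⟩ : Nonempty (f ⁻¹' {w}) := mk_ne_zero_iff.mp (zero_le.trans_lt hw).ne'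
  set S₀ := Subtype.val '' (f ⁻¹' {w})
  have hS₀ : lam < #S₀ := by rwa [mk_image_eq Subtype.val_injective]
  have hadj : ∀ b ∈ S₀, ∃ v ∈ m.branch b, H.Adj (u b₀) v := by
    rintro _ ⟨b, hb, rfl⟩
    have hub : u b = u b₀ := congrArg Subtype.val (hb.trans hb₀.symm)
    exact ⟨v b, hv b, hub ▸ huv b⟩
  obtain ⟨T, hT, S', hS', hTS', hTc, hS'c⟩ :=
    (Set.infinite_coe_iff.mp (infinite_iff.mpr (hlam.trans hS₀.le))).exists_disjoint_subsets_mk_eq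
  refine ⟨a b₀, ha b₀, u b₀, hu b₀, T, hT.trans (Subtype.coe_image_subset _ _), S',
    hS'.trans (Subtype.coe_image_subset _ _), hTS', hTc ▸ hS₀, hS'c ▸ hS₀, ?_⟩
  rintro b (hb | hb)
  exacts [hadj b (hT hb), hadj b (hS' hb)]

theorem exists_hubs (hlam : ℵ₀ ≤ lam) (hAB : Disjoint A B) (hBA : ∀ b ∈ B, X.neighborSet b ⊆ A)
    (hdeg : ∀ b ∈ B, (X.neighborSet b).Infinite)
    (hU : lift.{u} #(⋃ a ∈ A, m.branch a) ≤ lift.{v} lam) (hB : lam < #B) :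
    ∃ (w : ℕ → V) (T : ℕ → Set W), Injective w ∧ Pairwise (Disjoint on T) ∧
      (∀ n, lam < #(T n)) ∧ (∀ i n, i ≤ n → ∀ b ∈ T n, ∃ v ∈ m.branch b, H.Adj (w i) v) ∧
      ∀ i n, ∀ b ∈ T n, w i ∉ m.branch b := by
  -- A state `(F, S)` consists of the `A`-vertices whose branch sets already contain a hub and
  -- the pool of `B`-vertices still available.
  obtain ⟨s, hs₀, hs⟩ := exists_seq_of_forall_exists
    (P := fun s : Set W × Set W => s.1.Finite ∧ s.2 ⊆ B ∧ lam < #s.2)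
    (R := fun s t => ∃ a ∈ A \ s.1, ∃ w ∈ m.branch a, ∃ T ⊆ s.2, t.1 = insert a s.1 ∧
      t.2 ⊆ s.2 ∧ Disjoint T t.2 ∧ lam < #T ∧ ∀ b ∈ T ∪ t.2, ∃ v ∈ m.branch b, H.Adj w v)
    (s₀ := (∅, B)) ⟨Set.finite_empty, subset_rfl, hB⟩ fun s ⟨hF, hSB, hS⟩ => by
      obtain ⟨a, ha, w, hw, T, hT, S', hS', hTS', hTc, hS'c, hadj⟩ :=
        m.exists_hub hlam hBA hdeg hU hF hSB hS
      exact ⟨(insert a s.1, S'), ⟨hF.insert a, hS'.trans hSB, hS'c⟩,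
        a, ha, w, hw, T, hT, rfl, hS', hTS', hTc, hadj⟩
  choose a ha w hw T hTS hF hS hTS' hT hadj using hs
  have hanti : Antitone fun n => (s n).2 := antitone_nat_of_succ_le hS
  have hainj : Injective a :=
    injective_of_mem_succ_of_notMem (F := fun n => (s n).1)
      (monotone_nat_of_le_succ fun n => (hF n).symm ▸ Set.subset_insert _ _)
      (fun n => (hF n).symm ▸ Set.mem_insert _ _) fun n => (ha n).2
  have hTB : ∀ n, T n ⊆ B := fun n =>
    (hTS n).trans (by simpa [hs₀] using hanti (Nat.zero_le n))
  refine ⟨w, T, fun i j h => hainj ?_, pairwise_disjoint_of_subset_of_disjoint_succ hanti hTS hTS',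
    hT, ?_, ?_⟩
  · by_contra hne
    exact (m.branch_disjoint hne).ne_of_mem (hw i) (hw j) h
  · intro i n hin b hb
    rcases hin.eq_or_lt with rfl | hlt
    · exact hadj i b (.inl hb)
    · exact hadj i b (.inr (hanti (Nat.succ_le_of_lt hlt) (hTS n hb)))
  · intro i n b hb hwb
    exact (m.branch_disjoint (hAB.ne_of_mem (ha i).1 (hTB n hb))).ne_of_mem (hw i) hwb rfl

end MinorMap

theorem stmt17_general {W : Type u} {V : Type v} (X : SimpleGraph W)
    (hX : IsLambdaLambdaPlusGraph X)
    (H : SimpleGraph V) (m : MinorMap X H)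
    (hcount : ∀ x, (m.branch x).Countable) :
    HasFatTK H := by
  obtain ⟨lam, A, B, hlam, -, hAB, hbip, hA, hB, hdeg⟩ := hX
  have hBA : ∀ b ∈ B, X.neighborSet b ⊆ A := fun b hb _ hab =>
    ((hbip hab).resolve_left fun h => hAB.ne_of_mem h.1 hb rfl).2
  have hU := lift_mk_biUnion_le_of_countable m.branch (hA ▸ hlam) fun a _ => hcount a
  obtain ⟨w, T, hw, hTdisj, hT, hadj, hwT⟩ :=
    m.exists_hubs hlam hAB hBA hdeg (hA ▸ hU) (hB ▸ Order.lt_succ lam)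
  have e : ∀ n, (ℵ₁ : Cardinal.{v}).out ↪ T n := fun n =>
    (nonempty_embedding_out_aleph_one (hlam.trans_lt (hT n))).some
  let R : ℕ × ℕ → (ℵ₁ : Cardinal.{v}).out → Set V := fun p k => m.branch (e (Nat.pair p.1 p.2) k)
  have hRdisj : Pairwise (Disjoint on uncurry R) :=
    Pairwise.comp_of_injective (r := Disjoint on m.branch) m.branch_disjoint
      ((injective_of_pairwise_disjoint_embedding hTdisj e).comp
        (Nat.pairEquiv.injective.prodMap injective_id))
  exact hasFatTK_of_connectors not_countable_out_aleph_one w hw R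
    (fun _ _ _ _ => (m.branch_connected _).preconnected) hRdisj (fun n _ _ => hwT n _ _ (e _ _).2)
    fun i j _ k => ⟨hadj i _ (Nat.left_le_pair i j) _ (e _ k).2,
      hadj j _ (Nat.right_le_pair i j) _ (e _ k).2⟩

/-- Every countably inflated `IX` graph of a `(λ,λ⁺)`-graph `X` contains a fat `TK^{ℵ₀}`. -/
theorem stmt17 {W : Type u} {V : Type v} (X : SimpleGraph W)
    (hX : IsLambdaLambdaPlusGraph X)
    (H : SimpleGraph V) (m : MinorMap X H)
    (hcover : (⋃ x : W, m.branch x) = Set.univ)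
    (hcount : ∀ x, (m.branch x).Countable) :
    HasFatTK H :=
  stmt17_general X hX H m hcount
end

section
/- Let κ be a regular uncountable cardinal, S ⊆ κ a stationary set of ordinals of cofinality ω, and let X be a (κ,S)-graph. Then every countably inflated IX graph H contains a fat TK^{ℵ₀} as a subgraph. -/
open SimpleGraph

universe u v w

/-- A club (closed unbounded) subset of a linear order. -/
def IsClubIn {α : Type*} [LinearOrder α] (C : Set α) : Prop :=
  (∀ a : α, ∃ b ∈ C, a < b) ∧
  ∀ a : α, (∃ b, b < a) → (∀ b < a, ∃ c ∈ C, b < c ∧ c < a) → a ∈ C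

/-- A stationary subset of a linear order: one meeting every club set. -/
def IsStationaryIn {α : Type*} [LinearOrder α] (S : Set α) : Prop :=
  ∀ C : Set α, IsClubIn C → (S ∩ C).Nonempty

/-- A `(κ,S)`-graph: `κ` is a regular uncountable cardinal, the vertex set is `κ`,
`S ⊆ κ` is a stationary set of ordinals of cofinality `ω`, and for every `s ∈ S`
the set of neighbours of `s` below `s` is countable with supremum `s`. -/
def IsKappaSGraph (κ : Cardinal.{u}) (S : Set κ.ord.ToType)
    (H : SimpleGraph κ.ord.ToType) : Prop :=
  κ.IsRegular ∧ Cardinal.aleph0 < κ ∧ IsStationaryIn S ∧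
  (∀ s ∈ S, ∃ f : ℕ → κ.ord.ToType, StrictMono f ∧ (∀ n, f n < s) ∧
    ∀ x < s, ∃ n, x ≤ f n) ∧
  ∀ s ∈ S, {v | H.Adj s v ∧ v < s}.Countable ∧
    ∀ x < s, ∃ v, H.Adj s v ∧ v < s ∧ x < v

/-!
Iterating Fodor's lemma gives vertices `x₀ < x₁ < ⋯` of `X` and stationary sets
`T₀ ⊇ T₁ ⊇ ⋯` such that every `s ∈ Tₙ` is adjacent to `xₙ`; since the branch set `V_{xₙ}` is
countable, a pigeonhole step on stationary sets makes all edges from the branch sets `V_s`,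
`s ∈ Tₙ`, end in a single vertex `vₙ ∈ V_{xₙ}`. The `vₙ` are the branch vertices of the fat
`TK^{ℵ₀}`: for `i < j` each `s ∈ Tⱼ` yields a `vᵢ`–`vⱼ` path through the connected set `V_s`,
and as stationary sets are uncountable, `ℵ₁` such `s` can be chosen for every pair, all distinct
and different from the `xₙ`.
-/

open Cardinal Set Function

section LinearOrder

variable {α : Type*} [LinearOrder α] {S T : Set α}

theorem IsClubIn.inter_Ioi {C : Set α} (hC : IsClubIn C) (a : α) : IsClubIn (C ∩ Ioi a) := by
  refine ⟨fun c => ?_, fun b hb hcof => ⟨hC.2 b hb fun c hc => ?_, ?_⟩⟩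
  · obtain ⟨d, hd, hcd⟩ := hC.1 (max a c)
    exact ⟨d, ⟨hd, (le_max_left _ _).trans_lt hcd⟩, (le_max_right _ _).trans_lt hcd⟩
  · obtain ⟨d, ⟨hd, -⟩, hcd, hdb⟩ := hcof c hc
    exact ⟨d, hd, hcd, hdb⟩
  · obtain ⟨b₀, hb₀⟩ := hb
    obtain ⟨d, ⟨-, had⟩, -, hdb⟩ := hcof b₀ hb₀
    exact had.trans hdb

theorem isClubIn_univ [NoMaxOrder α] : IsClubIn (univ : Set α) :=
  ⟨fun a => (exists_gt a).imp fun _ hb => ⟨mem_univ _, hb⟩, fun _ _ _ => mem_univ _⟩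

theorem IsStationaryIn.mono (hS : IsStationaryIn S) (hST : S ⊆ T) : IsStationaryIn T :=
  fun C hC => (hS C hC).mono (inter_subset_inter_left C hST)

theorem IsStationaryIn.nonempty [NoMaxOrder α] (hS : IsStationaryIn S) : S.Nonempty :=
  (hS univ isClubIn_univ).mono inter_subset_left

theorem IsStationaryIn.inter_Ioi (hS : IsStationaryIn S) (a : α) : IsStationaryIn (S ∩ Ioi a) :=
  fun C hC => by simpa only [inter_assoc, inter_comm (Ioi a)] using hS _ (hC.inter_Ioi a)

end LinearOrder

def diagInter {α : Type*} [LT α] (C : α → Set α) : Set α :=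
  {β | ∀ x < β, β ∈ C x}

section Regular

variable {κ : Cardinal.{u}} {S : Set κ.ord.ToType}

theorem exists_forall_lt_of_mk_lt (hreg : κ.IsRegular) {s : Set κ.ord.ToType} (hs : #s < κ) :
    ∃ b, ∀ x ∈ s, x < b :=
  not_isCofinal_iff.1 fun h =>
    (Order.cof_le h).not_gt (by rwa [Ordinal.cof_toType, hreg.cof_ord])

theorem exists_forall_lt_of_countable_s18 (hreg : κ.IsRegular) (hκ : ℵ₀ < κ)
    {s : Set κ.ord.ToType} (hs : s.Countable) : ∃ b, ∀ x ∈ s, x < b :=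
  exists_forall_lt_of_mk_lt hreg ((mk_le_aleph0_iff.2 hs.to_subtype).trans_lt hκ)

theorem isClubIn_diagInter (hreg : κ.IsRegular) (hκ : ℵ₀ < κ)
    {C : κ.ord.ToType → Set κ.ord.ToType} (hC : ∀ x, IsClubIn (C x)) :
    IsClubIn (diagInter C) := by
  have := noMaxOrder hreg.aleph0_le
  refine ⟨fun a => ?_, fun a ha hcof x hx => (hC x).2 a ha fun γ hγ => ?_⟩
  · choose c hcC hc using fun x p => (hC x).1 p
    -- fewer than `κ` values `c x p`, hence bounded by regularity
    have hnext : ∀ p, ∃ q, p < q ∧ ∀ x ≤ p, c x p < q := by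
      intro p
      obtain ⟨p', hp'⟩ := exists_gt p
      obtain ⟨q, hq⟩ := exists_forall_lt_of_mk_lt hreg
        (mk_image_le.trans_lt (by simpa using mk_Iio_lt p' (by simp)) :
          #((fun x => c x p) '' Iio p') < κ)
      exact ⟨q, (hc p p).trans (hq _ ⟨p, hp', rfl⟩),
        fun x hx => hq _ ⟨x, hx.trans_lt hp', rfl⟩⟩
    choose next hlt hnext using hnext
    let b : ℕ → κ.ord.ToType := fun n => next^[n] a
    have hb : ∀ n, b (n + 1) = next (b n) := fun n => iterate_succ_apply' next n a
    obtain ⟨t, ht⟩ := exists_forall_lt_of_countable_s18 hreg hκ (countable_range b)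
    obtain ⟨β, hβ, hβmin⟩ := wellFounded_lt.has_min {t | ∀ n, b n < t}
      ⟨t, fun n => ht _ ⟨n, rfl⟩⟩
    refine ⟨β, fun x hx => (hC x).2 β ⟨a, hβ 0⟩ fun γ hγ => ?_, hβ 0⟩
    obtain ⟨n, hn⟩ : ∃ n, max x γ ≤ b n := by
      by_contra! h
      exact hβmin _ h (max_lt hx hγ)
    refine ⟨c x (b n), hcC _ _, (le_of_max_le_right hn).trans_lt (hc _ _), ?_⟩
    exact (hnext _ x (le_of_max_le_left hn)).trans (hb n ▸ hβ (n + 1))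
  · obtain ⟨d, hd, hγd, hda⟩ := hcof (max γ x) (max_lt hγ hx)
    exact ⟨d, hd x ((le_max_right _ _).trans_lt hγd), (le_max_left _ _).trans_lt hγd, hda⟩

theorem IsStationaryIn.exists_stationary_fiber_of_regressive (hreg : κ.IsRegular)
    (hκ : ℵ₀ < κ) (hS : IsStationaryIn S) {f : κ.ord.ToType → κ.ord.ToType}
    (hf : ∀ s ∈ S, f s < s) : ∃ x, IsStationaryIn {s ∈ S | f s = x} := by
  by_contra! h
  simp only [IsStationaryIn, not_forall] at h
  choose C hC hempty using h
  obtain ⟨s, hs, hsC⟩ := hS _ (isClubIn_diagInter hreg hκ hC)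
  exact hempty (f s) ⟨s, ⟨hs, rfl⟩, hsC (f s) (hf s hs)⟩

theorem IsStationaryIn.exists_stationary_fiber_of_countable (hreg : κ.IsRegular)
    (hκ : ℵ₀ < κ) (hS : IsStationaryIn S) {β : Type*} {I : Set β} (hI : I.Countable)
    {g : κ.ord.ToType → β} (hg : ∀ s ∈ S, g s ∈ I) :
    ∃ i ∈ I, IsStationaryIn {s ∈ S | g s = i} := by
  have := noMaxOrder hreg.aleph0_le
  have : Infinite κ.ord.ToType := infinite_iff.2 (by simpa using hreg.aleph0_le)
  obtain ⟨e, he⟩ := countable_iff_exists_injOn.1 hI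
  let ν := Infinite.natEmbedding κ.ord.ToType
  obtain ⟨c, hc⟩ := exists_forall_lt_of_countable_s18 hreg hκ (countable_range ν)
  -- above `c`, the map `ν ∘ e ∘ g` is regressive
  obtain ⟨x, hx⟩ := (hS.inter_Ioi c).exists_stationary_fiber_of_regressive hreg hκ
    (f := fun s => ν (e (g s))) fun s hs => (hc _ ⟨_, rfl⟩).trans hs.2
  obtain ⟨s₀, ⟨hs₀, -⟩, rfl⟩ := hx.nonempty
  refine ⟨g s₀, hg s₀ hs₀, hx.mono ?_⟩
  rintro s ⟨⟨hs, -⟩, hfs⟩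
  exact ⟨hs, he (hg s hs) (hg s₀ hs₀) (ν.injective hfs)⟩

theorem IsStationaryIn.not_countable (hreg : κ.IsRegular) (hκ : ℵ₀ < κ)
    (hS : IsStationaryIn S) : ¬ S.Countable := fun hc => by
  have := noMaxOrder hreg.aleph0_le
  obtain ⟨b, hb⟩ := exists_forall_lt_of_countable_s18 hreg hκ hc
  obtain ⟨s, hs, hbs⟩ := (hS.inter_Ioi b).nonempty
  exact (hb s hs).not_gt hbs

end Regular

theorem exists_injective_forall_mem_of_mk_le_aleph_one {ι : Type u} {α : Type v}
    (hι : #ι ≤ ℵ₁) {A : ι → Set α} (hA : ∀ i, ¬ (A i).Countable) :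
    ∃ g : ι → α, Injective g ∧ ∀ i, g i ∈ A i := by
  obtain ⟨e⟩ : Nonempty (ι ↪ (ℵ₁ : Cardinal.{u}).ord.ToType) := by
    rwa [← le_def, mk_toType, card_ord]
  let r : ι → ι → Prop := fun j i => e j < e i
  have hr : WellFounded r := InvImage.wf e wellFounded_lt
  have hsmall : ∀ i, Countable {j // r j i} := by
    intro i
    have : Countable (Iio (e i)) := by
      refine (le_aleph0_iff_set_countable.1 ?_).to_subtype
      simpa [← succ_aleph0, Order.lt_succ_iff] using mk_Iio_lt (e i) (by simp)
    exact Injective.countable (f := fun j : {j // r j i} => (⟨e j, j.2⟩ : Iio (e i)))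
      fun j j' h => Subtype.ext (e.injective (congrArg Subtype.val h))
  have hfresh : ∀ i (g : ∀ j, r j i → α),
      (A i \ range fun j : {j // r j i} => g j.1 j.2).Nonempty := fun i g =>
    sdiff_nonempty.2 fun hsub => hA i ((countable_range _).mono hsub)
  let g : ι → α := hr.fix fun i g => (hfresh i g).some
  have hg : ∀ i, g i ∈ A i \ range fun j : {j // r j i} => g j.1 := fun i => by
    have hfix : g i = (hfresh i fun j _ => g j).some := hr.fix_eq _ i
    exact hfix ▸ (hfresh i fun j _ => g j).some_mem
  refine ⟨g, fun i j hij => by_contra fun hne => ?_, fun i => (hg i).1⟩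
  rcases lt_or_gt_of_ne (e.injective.ne hne) with h | h
  · exact (hg j).2 ⟨⟨i, h⟩, hij⟩
  · exact (hg i).2 ⟨⟨j, h⟩, hij.symm⟩

namespace SimpleGraph

variable {V : Type u} {G : SimpleGraph V}

theorem exists_isPath_through_of_induce_connected {B : Set V} (hB : (G.induce B).Connected)
    {a b u w : V} (hu : u ∈ B) (hw : w ∈ B) (hau : G.Adj a u) (hwb : G.Adj w b)
    (ha : a ∉ B) (hb : b ∉ B) (hab : a ≠ b) :
    ∃ p : G.Walk a b, p.IsPath ∧ u ∈ p.support ∧ ∀ y ∈ p.support, y = a ∨ y = b ∨ y ∈ B := by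
  obtain ⟨q⟩ := hB.preconnected ⟨u, hu⟩ ⟨w, hw⟩
  classical
  let r : G.Walk u w := q.toPath.1.map (Embedding.induce B).toHom
  have hr : r.IsPath := q.toPath.2.map fun _ _ h => Subtype.ext h
  have hrB : ∀ y ∈ r.support, y ∈ B := by
    intro y hy
    rw [show r.support = _ from Walk.support_map _ _] at hy
    obtain ⟨y, -, rfl⟩ := List.mem_map.1 hy
    exact y.2
  refine ⟨.cons hau (r.concat hwb), (hr.concat (fun h => hb (hrB _ h)) hwb).cons ?_, ?_, ?_⟩
  · simpa [Walk.support_concat] using ⟨fun h => ha (hrB _ h), hab⟩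
  · simp
  · intro y hy
    simp only [Walk.support_cons, Walk.support_concat, List.mem_cons,
      List.mem_append, List.not_mem_nil, or_false] at hy
    rcases hy with rfl | hy | rfl
    · exact .inl rfl
    · exact .inr (.inr (hrB y hy))
    · exact .inr (.inl rfl)

end SimpleGraph

theorem hasFatTK_of_connectors_s18 {V ι : Type u} {G : SimpleGraph V} (h : ℕ → V)
    (hh : Injective h) (hι : ¬ Countable ι) (B : ℕ × ℕ × ι → Set V)
    (hB : Pairwise (Disjoint on B)) (hhB : ∀ c n, h n ∉ B c)
    (hconn : ∀ c, (G.induce (B c)).Connected)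
    (hattach : ∀ i j k, i < j →
      (∃ u ∈ B (i, j, k), G.Adj (h i) u) ∧ ∃ w ∈ B (i, j, k), G.Adj w (h j)) :
    HasFatTK G := by
  have hpath : ∀ i j, i < j → ∀ k, ∃ p : G.Walk (h i) (h j), p.IsPath ∧
      (∃ u ∈ B (i, j, k), u ∈ p.support) ∧
      ∀ y ∈ p.support, y = h i ∨ y = h j ∨ y ∈ B (i, j, k) := by
    intro i j hij k
    obtain ⟨⟨u, hu, hiu⟩, w, hw, hwj⟩ := hattach i j k hij
    obtain ⟨p, hp, hup, hpB⟩ := G.exists_isPath_through_of_induce_connected (hconn _) hu hw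
      hiu hwj (hhB _ i) (hhB _ j) (hh.ne hij.ne)
    exact ⟨p, hp, ⟨u, hu, hup⟩, hpB⟩
  choose P hP hPB hPsupp using hpath
  refine ⟨⟨h, hh, ι, hι, P, hP, fun i j hij k k' hkk' => by_contra fun hne => ?_, ?_, ?_⟩⟩
  · obtain ⟨u, hu, hup⟩ := hPB i j hij k
    rw [hkk'] at hup
    rcases hPsupp i j hij k' u hup with rfl | rfl | hu'
    · exact hhB _ i hu
    · exact hhB _ j hu
    · exact (hB (by simpa using hne)).ne_of_mem hu hu' rfl
  · rintro i j hij k _ hv ⟨n, rfl⟩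
    exact (hPsupp i j hij k _ hv).imp_right (Or.resolve_right · (hhB _ n))
  · intro i j hij k i' j' hij' k' hne y hy hy'
    rcases hPsupp i j hij k y hy with rfl | rfl | hyB
    · exact ⟨i, rfl⟩
    · exact ⟨j, rfl⟩
    rcases hPsupp i' j' hij' k' y hy' with rfl | rfl | hyB'
    · exact ⟨i', rfl⟩
    · exact ⟨j', rfl⟩
    exact ((hB (by simp only [ne_eq, Prod.ext_iff]; tauto)).ne_of_mem hyB hyB' rfl).elim

section KappaSGraph

variable {κ : Cardinal.{u}} {V : Type v} {X : SimpleGraph κ.ord.ToType} {H : SimpleGraph V}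
  {S T : Set κ.ord.ToType}

theorem IsStationaryIn.exists_gt_stationary_adj (hreg : κ.IsRegular) (hκ : ℵ₀ < κ)
    (hT : IsStationaryIn T) (hnb : ∀ s ∈ T, ∀ y < s, ∃ x, X.Adj s x ∧ x < s ∧ y < x)
    (q : κ.ord.ToType) : ∃ x, q < x ∧ IsStationaryIn {s ∈ T | X.Adj s x} := by
  have := noMaxOrder hreg.aleph0_le
  have : Nonempty κ.ord.ToType := ⟨q⟩
  have hnbq : ∀ s ∈ T ∩ Ioi q, ∃ x, X.Adj s x ∧ x < s ∧ q < x := fun s hs => hnb s hs.1 q hs.2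
  choose! g hgadj hglt hgq using hnbq
  obtain ⟨x, hx⟩ := (hT.inter_Ioi q).exists_stationary_fiber_of_regressive hreg hκ hglt
  obtain ⟨s, hs, rfl⟩ := hx.nonempty
  exact ⟨g s, hgq s hs, hx.mono fun t ⟨ht, hgt⟩ => ⟨ht.1, hgt ▸ hgadj t ht⟩⟩

theorem IsStationaryIn.exists_stationary_attached (hreg : κ.IsRegular) (hκ : ℵ₀ < κ)
    (m : MinorMap X H) {x : κ.ord.ToType} (hx : (m.branch x).Countable)
    (hT : IsStationaryIn T) (hadj : ∀ s ∈ T, X.Adj s x) :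
    ∃ v ∈ m.branch x, IsStationaryIn {s ∈ T | ∃ u ∈ m.branch s, H.Adj u v} := by
  have : Nonempty V := ⟨(m.branch_nonempty x).some⟩
  choose! u hu g hg hug using fun s hs => m.branch_adj (hadj s hs)
  obtain ⟨v, hv, hTv⟩ := hT.exists_stationary_fiber_of_countable hreg hκ hx hg
  exact ⟨v, hv, hTv.mono fun s ⟨hs, hgs⟩ => ⟨hs, u s, hu s hs, hgs ▸ hug s hs⟩⟩

theorem exists_attached_sequence (hreg : κ.IsRegular) (hκ : ℵ₀ < κ) (hS : IsStationaryIn S)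
    (hnb : ∀ s ∈ S, ∀ y < s, ∃ x, X.Adj s x ∧ x < s ∧ y < x) (m : MinorMap X H)
    (hcount : ∀ x, (m.branch x).Countable) :
    ∃ (x : ℕ → κ.ord.ToType) (v : ℕ → V) (T : ℕ → Set κ.ord.ToType), StrictMono x ∧
      (∀ n, v n ∈ m.branch (x n)) ∧ Antitone T ∧ (∀ n, IsStationaryIn (T n)) ∧
      ∀ n, ∀ s ∈ T n, ∃ u ∈ m.branch s, H.Adj u (v n) := by
  have := noMaxOrder hreg.aleph0_le
  let Stat := {T : Set κ.ord.ToType // IsStationaryIn T ∧ T ⊆ S}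
  have step : ∀ p : κ.ord.ToType × Stat, ∃ p' : κ.ord.ToType × Stat, ∃ v ∈ m.branch p'.1,
      p.1 < p'.1 ∧ p'.2.1 ⊆ p.2.1 ∧ ∀ s ∈ p'.2.1, ∃ u ∈ m.branch s, H.Adj u v := by
    rintro ⟨q, T, hT, hTS⟩
    obtain ⟨x, hqx, hTx⟩ := hT.exists_gt_stationary_adj hreg hκ (fun s hs => hnb s (hTS hs)) q
    obtain ⟨v, hv, hTv⟩ := hTx.exists_stationary_attached hreg hκ m (hcount x) fun s hs => hs.2
    exact ⟨(x, ⟨_, hTv, fun s hs => hTS hs.1.1⟩), v, hv, hqx, fun s hs => hs.1.1, fun s hs => hs.2⟩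
  choose next v hv hlt hsub hatt using step
  obtain ⟨s₀, -⟩ := hS.nonempty
  let p : ℕ → κ.ord.ToType × Stat := fun n => Nat.rec (s₀, ⟨S, hS, subset_rfl⟩) (fun _ => next) n
  exact ⟨fun n => (p (n + 1)).1, fun n => v (p n), fun n => (p (n + 1)).2.1,
    strictMono_nat_of_lt_succ fun n => hlt (p (n + 1)), fun n => hv (p n),
    antitone_nat_of_succ_le fun n => hsub (p (n + 1)), fun n => (p (n + 1)).2.2.1,
    fun n => hatt (p n)⟩

end KappaSGraph

theorem stmt18_general {V : Type v} (κ : Cardinal.{u}) (S : Set κ.ord.ToType)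
    (X : SimpleGraph κ.ord.ToType) (hX : IsKappaSGraph κ S X)
    (H : SimpleGraph V) (m : MinorMap X H)
    (hcount : ∀ x, (m.branch x).Countable) :
    HasFatTK H := by
  obtain ⟨hreg, hκ, hS, -, hnb⟩ := hX
  obtain ⟨x, v, T, hx, hv, hT, hTstat, hTatt⟩ :=
    exists_attached_sequence hreg hκ hS (fun s hs => (hnb s hs).2) m hcount
  let Ω := (ℵ₁ : Cardinal.{v}).ord.ToType
  obtain ⟨σ, hσ, hσT⟩ := exists_injective_forall_mem_of_mk_le_aleph_one (ι := ℕ × ℕ × Ω)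
    (A := fun c => T c.2.1 \ range x) (by simp [Ω, mk_prod])
    fun c hc => (hTstat _).not_countable hreg hκ (hc.of_sdiff (countable_range x))
  have hσx : ∀ c n, σ c ≠ x n := fun c n h => (hσT c).2 ⟨n, h.symm⟩
  refine hasFatTK_of_connectors_s18 v
    (fun i j h => hx.injective <| by_contra fun hne =>
      (m.branch_disjoint hne).ne_of_mem (hv i) (hv j) h)
    (fun h => (mk_le_aleph0_iff.2 h).not_gt (by simp [Ω]))
    (fun c => m.branch (σ c)) (fun c c' hcc' => m.branch_disjoint (hσ.ne hcc'))
    (fun c n hn => (m.branch_disjoint (hσx c n)).ne_of_mem hn (hv n) rfl)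
    (fun c => m.branch_connected _) fun i j k hij => ?_
  obtain ⟨u, hu, hui⟩ := hTatt i _ (hT hij.le (hσT (i, j, k)).1)
  exact ⟨⟨u, hu, hui.symm⟩, hTatt j _ (hσT (i, j, k)).1⟩

/-- Every countably inflated `IX` graph of a `(κ,S)`-graph `X` contains a fat `TK^{ℵ₀}`. -/
theorem stmt18 {V : Type v} (κ : Cardinal.{u}) (S : Set κ.ord.ToType)
    (X : SimpleGraph κ.ord.ToType) (hX : IsKappaSGraph κ S X)
    (H : SimpleGraph V) (m : MinorMap X H)
    (hcover : (⋃ x, m.branch x) = Set.univ)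
    (hcount : ∀ x, (m.branch x).Countable) :
    HasFatTK H :=
  stmt18_general κ S X hX H m hcount
end
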